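/- arXiv:1405.0804 — 8 statements merged into one kernel-verified Lean document; each statement's English description precedes it below -/
import Mathlib

section
/- Fix N ≥ 1 and continuous maps δ : ℝ^N → ℝ^N and β : ℝ^N → ℝ with β > 0 everywhere. Let B₀ > 0 and D₀ ≥ 0, and let (x,t) : [s₀,s₁] → ℝ^N × ℝ be a C¹ curve such that for all s: t'(s) > 0, |x'(s)|² + 2⟨δ(x(s)),x'(s)⟩t'(s) − β(x(s)) t'(s)² ≤ 0, β(x(s)) ≤ B₀ and |δ(x(s))| ≤ D₀. Then t(s₁) − t(s₀) ≥ (2D₀ + √B₀)^{-1} ∫_{s₀}^{s₁} |x'(s)| ds. In particular, if the Euclidean length of x is at least 1, then t(s₁) − t(s₀) ≥ (2D₀ + √B₀)^{-1} > 0. -/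
/-!
Pointwise, Cauchy–Schwarz turns the causality inequality into
`|x'|² ≤ 2 D₀ t' |x'| + B₀ t'²`, whose positive root gives `|x'| ≤ (2D₀ + √B₀) t'`.
Integrating this bound against `t' = dt/ds` gives the estimate.
-/

open Real Set RealInnerProductSpace

theorem le_two_mul_add_sqrt_mul_of_sq_le {a τ D B : ℝ} (hτ : 0 ≤ τ) (hD : 0 ≤ D) (hB : 0 ≤ B)
    (h : a ^ 2 ≤ 2 * D * τ * a + B * τ ^ 2) : a ≤ (2 * D + √B) * τ := by
  by_contra! hlt
  have hsqrt : √B * τ ≤ a := by nlinarith [sqrt_nonneg B]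
  have ha : 0 < a := by nlinarith [sqrt_nonneg B]
  have hsq : √B * √B = B := mul_self_sqrt hB
  nlinarith [mul_lt_mul_of_pos_right hlt ha,
    mul_le_mul_of_nonneg_left hsqrt (mul_nonneg (sqrt_nonneg B) hτ)]

theorem norm_le_of_causal {E : Type*} [NormedAddCommGroup E] [InnerProductSpace ℝ E]
    {d v : E} {b B D τ : ℝ} (hτ : 0 ≤ τ) (hB : 0 ≤ B) (hb : b ≤ B) (hd : ‖d‖ ≤ D)
    (h : ‖v‖ ^ 2 + 2 * ⟪d, v⟫ * τ - b * τ ^ 2 ≤ 0) : ‖v‖ ≤ (2 * D + √B) * τ := by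
  have hinner : -(D * ‖v‖) ≤ ⟪d, v⟫ :=
    neg_le_of_abs_le ((abs_real_inner_le_norm d v).trans
      (mul_le_mul_of_nonneg_right hd (norm_nonneg v)))
  refine le_two_mul_add_sqrt_mul_of_sq_le hτ ((norm_nonneg d).trans hd) hB ?_
  nlinarith [mul_le_mul_of_nonneg_right hb (sq_nonneg τ)]

theorem stmt_2_general (N : ℕ)
    (δ : EuclideanSpace ℝ (Fin N) → EuclideanSpace ℝ (Fin N))
    (β : EuclideanSpace ℝ (Fin N) → ℝ)
    (B₀ D₀ : ℝ) (hB₀ : 0 < B₀) (hD₀ : 0 ≤ D₀)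
    (s₀ s₁ : ℝ) (hs : s₀ ≤ s₁)
    (x x' : ℝ → EuclideanSpace ℝ (Fin N)) (t t' : ℝ → ℝ)
    (hx' : Continuous x')
    (ht : ∀ s, HasDerivAt t (t' s) s)
    (htpos : ∀ s ∈ Set.Icc s₀ s₁, 0 < t' s)
    (hcausal : ∀ s ∈ Set.Icc s₀ s₁,
      ‖x' s‖ ^ 2 + 2 * ⟪δ (x s), x' s⟫ * t' s - β (x s) * t' s ^ 2 ≤ 0)
    (hβb : ∀ s ∈ Set.Icc s₀ s₁, β (x s) ≤ B₀)
    (hδb : ∀ s ∈ Set.Icc s₀ s₁, ‖δ (x s)‖ ≤ D₀) :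
    (2 * D₀ + Real.sqrt B₀)⁻¹ * (∫ s in s₀..s₁, ‖x' s‖) ≤ t s₁ - t s₀ ∧
    ((1 : ℝ) ≤ (∫ s in s₀..s₁, ‖x' s‖) →
      (2 * D₀ + Real.sqrt B₀)⁻¹ ≤ t s₁ - t s₀ ∧ 0 < (2 * D₀ + Real.sqrt B₀)⁻¹) := by
  set c := 2 * D₀ + √B₀
  have hc : 0 < c := by positivity
  have hpointwise : ∀ s ∈ Ioo s₀ s₁, c⁻¹ * ‖x' s‖ ≤ t' s := fun s hs' ↦ by
    have hs' := Ioo_subset_Icc_self hs'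
    rw [inv_mul_le_iff₀ hc]
    exact norm_le_of_causal (htpos s hs').le hB₀.le (hβb s hs') (hδb s hs') (hcausal s hs')
  have hmain : c⁻¹ * ∫ s in s₀..s₁, ‖x' s‖ ≤ t s₁ - t s₀ := by
    rw [← intervalIntegral.integral_const_mul]
    exact intervalIntegral.integral_le_sub_of_hasDeriv_right_of_le hs
      (fun s _ ↦ (ht s).continuousAt.continuousWithinAt) (fun s _ ↦ (ht s).hasDerivWithinAt)
      ((continuous_const.mul hx'.norm).integrableOn_Icc) hpointwise
  refine ⟨hmain, fun hlength ↦ ⟨?_, inv_pos.mpr hc⟩⟩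
  exact (le_mul_of_one_le_right (inv_nonneg.mpr hc.le) hlength).trans hmain

/-- A future-directed causal curve `(x,t)` for the standard stationary metric, whose
coefficients satisfy `β(x(s)) ≤ B₀` and `|δ(x(s))| ≤ D₀` along the curve, satisfies
`t(s₁) − t(s₀) ≥ (2D₀ + √B₀)⁻¹ ∫ |x'|`; in particular, if the spatial length is at least
`1`, then `t(s₁) − t(s₀) ≥ (2D₀ + √B₀)⁻¹ > 0`. -/
theorem stmt_2 (N : ℕ) (hN : 1 ≤ N)
    (δ : EuclideanSpace ℝ (Fin N) → EuclideanSpace ℝ (Fin N))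
    (β : EuclideanSpace ℝ (Fin N) → ℝ)
    (hδ : Continuous δ) (hβ : Continuous β) (hβpos : ∀ y, 0 < β y)
    (B₀ D₀ : ℝ) (hB₀ : 0 < B₀) (hD₀ : 0 ≤ D₀)
    (s₀ s₁ : ℝ) (hs : s₀ ≤ s₁)
    (x x' : ℝ → EuclideanSpace ℝ (Fin N)) (t t' : ℝ → ℝ)
    (hx : ∀ s, HasDerivAt x (x' s) s) (hx' : Continuous x')
    (ht : ∀ s, HasDerivAt t (t' s) s) (ht' : Continuous t')
    (htpos : ∀ s ∈ Set.Icc s₀ s₁, 0 < t' s)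
    (hcausal : ∀ s ∈ Set.Icc s₀ s₁,
      ‖x' s‖ ^ 2 + 2 * ⟪δ (x s), x' s⟫ * t' s - β (x s) * t' s ^ 2 ≤ 0)
    (hβb : ∀ s ∈ Set.Icc s₀ s₁, β (x s) ≤ B₀)
    (hδb : ∀ s ∈ Set.Icc s₀ s₁, ‖δ (x s)‖ ≤ D₀) :
    (2 * D₀ + Real.sqrt B₀)⁻¹ * (∫ s in s₀..s₁, ‖x' s‖) ≤ t s₁ - t s₀ ∧
    ((1 : ℝ) ≤ (∫ s in s₀..s₁, ‖x' s‖) →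
      (2 * D₀ + Real.sqrt B₀)⁻¹ ≤ t s₁ - t s₀ ∧ 0 < (2 * D₀ + Real.sqrt B₀)⁻¹) :=
  stmt_2_general N δ β B₀ D₀ hB₀ hD₀ s₀ s₁ hs x x' t t' hx' ht htpos hcausal hβb hδb
end

section
/- Fix N ≥ 1, continuous maps δ : ℝ^N → ℝ^N and β : ℝ^N → ℝ with β > 0 everywhere, a C¹ curve x : [0,1] → ℝ^N and t_p ∈ ℝ. Define t^l(s) = t_p + ∫₀^s [⟨δ(x(r)),x'(r)⟩ + √(⟨δ(x(r)),x'(r)⟩² + |x'(r)|² β(x(r)))]/β(x(r)) dr. Then: (i) t^l is C¹ with t^l(0) = t_p and (t^l)'(s) ≥ 0 for all s, with (t^l)'(s) > 0 whenever x'(s) ≠ 0; (ii) for every s ∈ [0,1], |x'(s)|² + 2⟨δ(x(s)),x'(s)⟩ (t^l)'(s) − β(x(s)) ((t^l)'(s))² = 0; (iii) t^l is the unique C¹ function t : [0,1] → ℝ with t(0) = t_p, t'(s) ≥ 0 for all s, satisfying the equation in (ii); (iv) if x is non-constant then T(x) := t^l(1) − t^l(0) = ∫₀¹ ⟨δ(x),x'⟩/β(x)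 ds + ∫₀¹ √(⟨δ(x),x'⟩² + |x'|² β(x))/β(x) ds > 0. -/
/-!
At each parameter the lightlike condition is a quadratic equation `c + 2 a y - b y² = 0` in the
time slope `y = t'(s)`, with `a = ⟨δ(x), x'⟩`, `c = |x'|²`, `b = β(x) > 0`. Its roots
`(a ± √(a² + c b)) / b` straddle `0`, so the larger one is the only nonnegative root (when `c = 0`
both roots collapse onto `0`, since then `a = 0` too). Hence `t^l` is lightlike, and any other
nondecreasing lightlike lift has the same derivative and the same initial value, so it equals
`t^l`. Finally, a non-constant curve has `x'(s₀) ≠ 0` somewhere, where the slope is positive;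
being continuous and nonnegative, its integral `T(x)` is positive.
-/

open Real Set RealInnerProductSpace

/-- The larger root of `c + 2 a y - b y²`. -/
noncomputable def lightlikeSlope (a c b : ℝ) : ℝ := (a + √(a ^ 2 + c * b)) / b

section LightlikeSlope

variable {a c b : ℝ}

lemma lightlikeSlope_nonneg (hb : 0 < b) (hc : 0 ≤ c) : 0 ≤ lightlikeSlope a c b := by
  have := abs_le_sqrt (le_add_of_nonneg_right (mul_nonneg hc hb.le) : a ^ 2 ≤ a ^ 2 + c * b)
  exact div_nonneg (by linarith [neg_abs_le a]) hb.le

lemma lightlikeSlope_pos (hb : 0 < b) (hc : 0 < c) : 0 < lightlikeSlope a c b := by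
  have : |a| < √(a ^ 2 + c * b) :=
    (lt_sqrt (abs_nonneg a)).mpr (by rw [sq_abs]; exact lt_add_of_pos_right _ (mul_pos hc hb))
  exact div_pos (by linarith [neg_abs_le a]) hb

lemma lightlikeSlope_isRoot (hb : 0 < b) (hc : 0 ≤ c) :
    c + 2 * a * lightlikeSlope a c b - b * lightlikeSlope a c b ^ 2 = 0 := by
  have hsq := sq_sqrt (by positivity : 0 ≤ a ^ 2 + c * b)
  unfold lightlikeSlope
  field_simp
  linear_combination (-1) * hsq

lemma eq_lightlikeSlope_of_isRoot (hb : 0 < b) (hc : 0 ≤ c) (hca : c = 0 → a = 0) {y : ℝ}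
    (hy : 0 ≤ y) (h : c + 2 * a * y - b * y ^ 2 = 0) : y = lightlikeSlope a c b := by
  have hsq : (b * y - a) ^ 2 = a ^ 2 + c * b := by linear_combination (-b) * h
  have habs : |b * y - a| = √(a ^ 2 + c * b) := by rw [← hsq, sqrt_sq_eq_abs]
  rcases le_or_gt a (b * y) with hay | hya
  · rw [abs_of_nonneg (sub_nonneg.mpr hay)] at habs
    rw [lightlikeSlope, eq_div_iff hb.ne']
    linarith
  · -- the smaller root is nonpositive, so `y = 0`, which forces `c = 0` and then `a = 0`
    rw [abs_of_neg (sub_neg.mpr hya)] at habs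
    have hy0 : y = 0 := by nlinarith [le_abs_self a]
    subst hy0
    obtain rfl : c = 0 := by linarith
    obtain rfl := hca rfl
    simp [lightlikeSlope]

end LightlikeSlope

lemma Continuous.lightlikeSlope {a c b : ℝ → ℝ} (ha : Continuous a) (hc : Continuous c)
    (hb : Continuous b) (hb0 : ∀ s, b s ≠ 0) :
    Continuous fun s => lightlikeSlope (a s) (c s) (b s) :=
  (ha.add (continuous_sqrt.comp ((ha.pow 2).add (hc.mul hb)))).div hb hb0

lemma intervalIntegral_lightlikeSlope {a c b : ℝ → ℝ} (ha : Continuous a) (hc : Continuous c)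
    (hb : Continuous b) (hb0 : ∀ s, b s ≠ 0) (u v : ℝ) :
    ∫ s in u..v, lightlikeSlope (a s) (c s) (b s) =
      (∫ s in u..v, a s / b s) + ∫ s in u..v, √(a s ^ 2 + c s * b s) / b s := by
  simp only [lightlikeSlope, add_div]
  exact intervalIntegral.integral_add ((ha.div hb hb0).intervalIntegrable u v)
    (((continuous_sqrt.comp ((ha.pow 2).add (hc.mul hb))).div hb hb0).intervalIntegrable u v)

section Curve

variable {E : Type*} [NormedAddCommGroup E] [InnerProductSpace ℝ E]

noncomputable def lightlikeLiftSlope (δ : E → E) (β : E → ℝ) (x x' : ℝ → E) (s : ℝ) : ℝ :=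
  lightlikeSlope ⟪δ (x s), x' s⟫ (‖x' s‖ ^ 2) (β (x s))

variable {δ : E → E} {β : E → ℝ} {x x' : ℝ → E}

lemma lightlikeLiftSlope_nonneg (hβ : ∀ y, 0 < β y) (s : ℝ) :
    0 ≤ lightlikeLiftSlope δ β x x' s :=
  lightlikeSlope_nonneg (hβ _) (sq_nonneg _)

lemma lightlikeLiftSlope_pos (hβ : ∀ y, 0 < β y) {s : ℝ} (hs : x' s ≠ 0) :
    0 < lightlikeLiftSlope δ β x x' s :=
  lightlikeSlope_pos (hβ _) (pow_pos (norm_pos_iff.mpr hs) 2)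

lemma lightlikeLiftSlope_isLightlike (hβ : ∀ y, 0 < β y) (s : ℝ) :
    ‖x' s‖ ^ 2 + 2 * ⟪δ (x s), x' s⟫ * lightlikeLiftSlope δ β x x' s
      - β (x s) * lightlikeLiftSlope δ β x x' s ^ 2 = 0 :=
  lightlikeSlope_isRoot (hβ _) (sq_nonneg _)

lemma eq_lightlikeLiftSlope_of_isLightlike (hβ : ∀ y, 0 < β y) {s y : ℝ} (hy : 0 ≤ y)
    (h : ‖x' s‖ ^ 2 + 2 * ⟪δ (x s), x' s⟫ * y - β (x s) * y ^ 2 = 0) :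
    y = lightlikeLiftSlope δ β x x' s := by
  refine eq_lightlikeSlope_of_isRoot (hβ _) (sq_nonneg _) (fun h0 => ?_) hy h
  rw [norm_eq_zero.mp (pow_eq_zero_iff two_ne_zero |>.mp h0), inner_zero_right]

lemma continuous_lightlikeLiftSlope (hδ : Continuous δ) (hβ : Continuous β)
    (hβpos : ∀ y, 0 < β y) (hx : Continuous x) (hx' : Continuous x') :
    Continuous (lightlikeLiftSlope δ β x x') :=
  ((hδ.comp hx).inner hx').lightlikeSlope (hx'.norm.pow 2) (hβ.comp hx)
    fun s => (hβpos (x s)).ne'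

lemma intervalIntegral_lightlikeLiftSlope (hδ : Continuous δ) (hβ : Continuous β)
    (hβpos : ∀ y, 0 < β y) (hx : Continuous x) (hx' : Continuous x') (u v : ℝ) :
    ∫ s in u..v, lightlikeLiftSlope δ β x x' s =
      (∫ s in u..v, ⟪δ (x s), x' s⟫ / β (x s)) +
        ∫ s in u..v, √(⟪δ (x s), x' s⟫ ^ 2 + ‖x' s‖ ^ 2 * β (x s)) / β (x s) :=
  intervalIntegral_lightlikeSlope ((hδ.comp hx).inner hx') (hx'.norm.pow 2) (hβ.comp hx)
    (fun s => (hβpos (x s)).ne') u v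

end Curve

lemma eqOn_Icc_of_hasDerivAt_eq {f g f' g' : ℝ → ℝ} {a b : ℝ}
    (hf : ∀ s ∈ Icc a b, HasDerivAt f (f' s) s) (hg : ∀ s ∈ Icc a b, HasDerivAt g (g' s) s)
    (h' : ∀ s ∈ Icc a b, f' s = g' s) (ha : f a = g a) : ∀ s ∈ Icc a b, f s = g s :=
  eq_of_has_deriv_right_eq (fun s hs => (hf s (Ico_subset_Icc_self hs)).hasDerivWithinAt)
    (fun s hs => h' s (Ico_subset_Icc_self hs) ▸ (hg s (Ico_subset_Icc_self hs)).hasDerivWithinAt)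
    (fun s hs => (hf s hs).continuousAt.continuousWithinAt)
    (fun s hs => (hg s hs).continuousAt.continuousWithinAt) ha

lemma exists_mem_Icc_hasDerivAt_ne_zero {F : Type*} [NormedAddCommGroup F] [NormedSpace ℝ F]
    {f f' : ℝ → F} {a b : ℝ} (hf : ∀ s ∈ Icc a b, HasDerivAt f (f' s) s)
    (hnc : ¬ ∀ s ∈ Icc a b, f s = f a) : ∃ s ∈ Icc a b, f' s ≠ 0 := by
  by_contra! h
  exact hnc <| constant_of_has_deriv_right_zero
    (fun s hs => (hf s hs).continuousAt.continuousWithinAt)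
    fun s hs => h s (Ico_subset_Icc_self hs) ▸ (hf s (Ico_subset_Icc_self hs)).hasDerivWithinAt

theorem stmt_3_general (N : ℕ)
    (δ : EuclideanSpace ℝ (Fin N) → EuclideanSpace ℝ (Fin N))
    (β : EuclideanSpace ℝ (Fin N) → ℝ)
    (hδ : Continuous δ) (hβ : Continuous β) (hβpos : ∀ y, 0 < β y)
    (x x' : ℝ → EuclideanSpace ℝ (Fin N))
    (hx : ∀ s, HasDerivAt x (x' s) s) (hx' : Continuous x')
    (t_p : ℝ) :
    ∀ tl tl' : ℝ → ℝ,
      (∀ s, tl s = t_p + ∫ r in (0:ℝ)..s,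
        (⟪δ (x r), x' r⟫ + Real.sqrt (⟪δ (x r), x' r⟫ ^ 2 + ‖x' r‖ ^ 2 * β (x r))) / β (x r)) →
      (∀ s, tl' s =
        (⟪δ (x s), x' s⟫ + Real.sqrt (⟪δ (x s), x' s⟫ ^ 2 + ‖x' s‖ ^ 2 * β (x s))) / β (x s)) →
      -- (i) `t^l` is `C¹`, `t^l(0) = t_p`, `(t^l)' ≥ 0`, and `(t^l)' > 0` where `x' ≠ 0`
      ((tl 0 = t_p ∧ Continuous tl' ∧ (∀ s, HasDerivAt tl (tl' s) s) ∧
          (∀ s, 0 ≤ tl' s) ∧ (∀ s, x' s ≠ 0 → 0 < tl' s)) ∧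
      -- (ii) the lift is lightlike
        (∀ s ∈ Set.Icc (0:ℝ) 1,
          ‖x' s‖ ^ 2 + 2 * ⟪δ (x s), x' s⟫ * tl' s - β (x s) * tl' s ^ 2 = 0) ∧
      -- (iii) uniqueness among nondecreasing `C¹` lifts starting at `t_p`
        (∀ t t' : ℝ → ℝ, (∀ s ∈ Set.Icc (0:ℝ) 1, HasDerivAt t (t' s) s) → t 0 = t_p →
          (∀ s ∈ Set.Icc (0:ℝ) 1, 0 ≤ t' s) →
          (∀ s ∈ Set.Icc (0:ℝ) 1,
            ‖x' s‖ ^ 2 + 2 * ⟪δ (x s), x' s⟫ * t' s - β (x s) * t' s ^ 2 = 0) →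
          ∀ s ∈ Set.Icc (0:ℝ) 1, t s = tl s) ∧
      -- (iv) the arrival time of a non-constant curve is positive
        ((¬ ∀ s ∈ Set.Icc (0:ℝ) 1, x s = x 0) →
          tl 1 - tl 0 = (∫ s in (0:ℝ)..1, ⟪δ (x s), x' s⟫ / β (x s)) +
              (∫ s in (0:ℝ)..1,
                Real.sqrt (⟪δ (x s), x' s⟫ ^ 2 + ‖x' s‖ ^ 2 * β (x s)) / β (x s)) ∧
          0 < tl 1 - tl 0)) := by
  intro tl tl' htl htl'
  obtain rfl : tl' = lightlikeLiftSlope δ β x x' := funext htl'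
  have hxc : Continuous x := continuous_iff_continuousAt.mpr fun s => (hx s).continuousAt
  have hslope_cont := continuous_lightlikeLiftSlope hδ hβ hβpos hxc hx'
  have htl0 : tl 0 = t_p := by simp [htl]
  have htl_deriv : ∀ s, HasDerivAt tl (lightlikeLiftSlope δ β x x' s) s := fun s => by
    rw [show tl = fun s => t_p + ∫ r in (0:ℝ)..s, lightlikeLiftSlope δ β x x' r from funext htl]
    exact (hslope_cont.integral_hasStrictDerivAt 0 s).hasDerivAt.const_add t_p
  have hT : tl 1 - tl 0 = ∫ s in (0:ℝ)..1, lightlikeLiftSlope δ β x x' s := by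
    rw [htl 1, htl0, add_sub_cancel_left]; rfl
  refine ⟨⟨htl0, hslope_cont, htl_deriv, lightlikeLiftSlope_nonneg hβpos,
      fun s => lightlikeLiftSlope_pos hβpos⟩,
    fun s _ => lightlikeLiftSlope_isLightlike hβpos s, ?_, fun hnc => ⟨?_, ?_⟩⟩
  · intro t t' ht ht0 ht'_nonneg ht'_lightlike
    exact eqOn_Icc_of_hasDerivAt_eq ht (fun s _ => htl_deriv s)
      (fun s hs =>
        eq_lightlikeLiftSlope_of_isLightlike hβpos (ht'_nonneg s hs) (ht'_lightlike s hs))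
      (ht0.trans htl0.symm)
  · rw [hT, intervalIntegral_lightlikeLiftSlope hδ hβ hβpos hxc hx']
  · obtain ⟨s₀, hs₀, hx's₀⟩ := exists_mem_Icc_hasDerivAt_ne_zero (fun s _ => hx s) hnc
    exact hT ▸ intervalIntegral.integral_pos zero_lt_one hslope_cont.continuousOn
      (fun s _ => lightlikeLiftSlope_nonneg hβpos s) ⟨s₀, hs₀, lightlikeLiftSlope_pos hβpos hx's₀⟩

/-- Coordinate form of Lemma 4.1 of the paper: the future-directed lightlike lift
`t^l(s) = t_p + ∫₀^s [⟨δ(x),x'⟩ + √(⟨δ(x),x'⟩² + |x'|²β(x))]/β(x)` of a spatial `C¹` curve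
`x` is `C¹`, starts at `t_p`, has nonnegative derivative (positive where `x' ≠ 0`), is
lightlike for the standard stationary metric, is the unique such nondecreasing lift, and
for non-constant `x` the arrival time `T(x) = t^l(1) − t^l(0)` is given by eq. (4.1) and is
positive. -/
theorem stmt_3 (N : ℕ) (hN : 1 ≤ N)
    (δ : EuclideanSpace ℝ (Fin N) → EuclideanSpace ℝ (Fin N))
    (β : EuclideanSpace ℝ (Fin N) → ℝ)
    (hδ : Continuous δ) (hβ : Continuous β) (hβpos : ∀ y, 0 < β y)
    (x x' : ℝ → EuclideanSpace ℝ (Fin N))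
    (hx : ∀ s, HasDerivAt x (x' s) s) (hx' : Continuous x')
    (t_p : ℝ) :
    ∀ tl tl' : ℝ → ℝ,
      (∀ s, tl s = t_p + ∫ r in (0:ℝ)..s,
        (⟪δ (x r), x' r⟫ + Real.sqrt (⟪δ (x r), x' r⟫ ^ 2 + ‖x' r‖ ^ 2 * β (x r))) / β (x r)) →
      (∀ s, tl' s =
        (⟪δ (x s), x' s⟫ + Real.sqrt (⟪δ (x s), x' s⟫ ^ 2 + ‖x' s‖ ^ 2 * β (x s))) / β (x s)) →
      -- (i) `t^l` is `C¹`, `t^l(0) = t_p`, `(t^l)' ≥ 0`, and `(t^l)' > 0` where `x' ≠ 0`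
      ((tl 0 = t_p ∧ Continuous tl' ∧ (∀ s, HasDerivAt tl (tl' s) s) ∧
          (∀ s, 0 ≤ tl' s) ∧ (∀ s, x' s ≠ 0 → 0 < tl' s)) ∧
      -- (ii) the lift is lightlike
        (∀ s ∈ Set.Icc (0:ℝ) 1,
          ‖x' s‖ ^ 2 + 2 * ⟪δ (x s), x' s⟫ * tl' s - β (x s) * tl' s ^ 2 = 0) ∧
      -- (iii) uniqueness among nondecreasing `C¹` lifts starting at `t_p`
        (∀ t t' : ℝ → ℝ, (∀ s ∈ Set.Icc (0:ℝ) 1, HasDerivAt t (t' s) s) → t 0 = t_p →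
          (∀ s ∈ Set.Icc (0:ℝ) 1, 0 ≤ t' s) →
          (∀ s ∈ Set.Icc (0:ℝ) 1,
            ‖x' s‖ ^ 2 + 2 * ⟪δ (x s), x' s⟫ * t' s - β (x s) * t' s ^ 2 = 0) →
          ∀ s ∈ Set.Icc (0:ℝ) 1, t s = tl s) ∧
      -- (iv) the arrival time of a non-constant curve is positive
        ((¬ ∀ s ∈ Set.Icc (0:ℝ) 1, x s = x 0) →
          tl 1 - tl 0 = (∫ s in (0:ℝ)..1, ⟪δ (x s), x' s⟫ / β (x s)) +
              (∫ s in (0:ℝ)..1,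
                Real.sqrt (⟪δ (x s), x' s⟫ ^ 2 + ‖x' s‖ ^ 2 * β (x s)) / β (x s)) ∧
          0 < tl 1 - tl 0)) :=
  stmt_3_general N δ β hδ hβ hβpos x x' hx hx' t_p
end

section
/- Fix N ≥ 1, continuous maps δ : ℝ^N → ℝ^N and β : ℝ^N → ℝ with β > 0 everywhere, and a C¹ curve x : [0,1] → ℝ^N; write h(s) = ⟨δ(x(s)),x'(s)⟩. Define T(x) = ∫₀¹ h/β(x) ds + ∫₀¹ √(h² + |x'|² β(x))/β(x) ds and T̃(x) = ∫₀¹ h/β(x) ds + √((∫₀¹ h²/β(x) ds + ∫₀¹ |x'|² ds) · ∫₀¹ 1/β(x) ds). Then 0 ≤ T(x) ≤ T̃(x). -/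
open Real Set RealInnerProductSpace MeasureTheory

/-!
Since `β > 0`, the second integrand of `T` factors as
`√(h² + |x'|²β)/β = √(h²/β + |x'|²) · √(1/β)`, so `T ≤ T̃` is the Cauchy–Schwarz inequality
for these two factors. Nonnegativity is pointwise: `-h ≤ |h| ≤ √(h² + |x'|²β)`.
-/

theorem integral_mul_le_sqrt_integral_sq_mul {α : Type*} [MeasurableSpace α] {μ : Measure α}
    {f g : α → ℝ} (hf0 : 0 ≤ᵐ[μ] f) (hg0 : 0 ≤ᵐ[μ] g) (hf : MemLp f 2 μ) (hg : MemLp g 2 μ) :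
    ∫ a, f a * g a ∂μ ≤ √((∫ a, f a ^ 2 ∂μ) * ∫ a, g a ^ 2 ∂μ) := by
  have hconj : (2 : ℝ).HolderConjugate 2 := by constructor <;> norm_num
  have key := integral_mul_le_Lp_mul_Lq_of_nonneg hconj hf0 hg0
    (by simpa using hf) (by simpa using hg)
  simp only [Real.rpow_two] at key
  rwa [Real.sqrt_eq_rpow, Real.mul_rpow (integral_nonneg fun a => sq_nonneg _)
    (integral_nonneg fun a => sq_nonneg _)]

theorem intervalIntegral_mul_le_sqrt_integral_sq_mul {f g : ℝ → ℝ} {a b : ℝ} (hab : a ≤ b)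
    (hf : Continuous f) (hg : Continuous g) (hf0 : ∀ s, 0 ≤ f s) (hg0 : ∀ s, 0 ≤ g s) :
    ∫ s in a..b, f s * g s ≤ √((∫ s in a..b, f s ^ 2) * ∫ s in a..b, g s ^ 2) := by
  simp only [intervalIntegral.integral_of_le hab]
  have memLp {u : ℝ → ℝ} (hu : Continuous u) : MemLp u 2 (volume.restrict (Ioc a b)) :=
    (memLp_two_iff_integrable_sq hu.aestronglyMeasurable.restrict).2
      (hu.pow 2).integrableOn_Ioc
  exact integral_mul_le_sqrt_integral_sq_mul (.of_forall hf0) (.of_forall hg0)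
    (memLp hf) (memLp hg)

theorem sqrt_sq_add_mul_div_eq {h w c : ℝ} (hc : 0 < c) :
    √(h ^ 2 + w ^ 2 * c) / c = √(h ^ 2 / c + w ^ 2) * √(1 / c) := by
  rw [← Real.sqrt_mul (by positivity),
    show (h ^ 2 / c + w ^ 2) * (1 / c) = (h ^ 2 + w ^ 2 * c) / c ^ 2 by field_simp,
    Real.sqrt_div (by positivity), Real.sqrt_sq hc.le]

theorem div_add_sqrt_sq_add_div_nonneg {h w c : ℝ} (hc : 0 < c) :
    0 ≤ h / c + √(h ^ 2 + w ^ 2 * c) / c := by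
  have : -h ≤ √(h ^ 2 + w ^ 2 * c) :=
    calc -h ≤ |h| := neg_le_abs h
      _ = √(h ^ 2) := (Real.sqrt_sq_eq_abs h).symm
      _ ≤ √(h ^ 2 + w ^ 2 * c) := Real.sqrt_le_sqrt (by nlinarith [sq_nonneg w])
  rw [← add_div]
  exact div_nonneg (by linarith) hc.le

section ArrivalTime

variable {h w c : ℝ → ℝ} {a b : ℝ}

theorem integral_div_add_integral_sqrt_div_nonneg (hab : a ≤ b)
    (hh : Continuous h) (hw : Continuous w) (hc : Continuous c) (hc0 : ∀ s, 0 < c s) :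
    0 ≤ (∫ s in a..b, h s / c s) + ∫ s in a..b, √(h s ^ 2 + w s ^ 2 * c s) / c s := by
  have hc0' : ∀ s, c s ≠ 0 := fun s => (hc0 s).ne'
  have hhc : Continuous fun s => h s / c s := hh.div hc hc0'
  have hsqrt : Continuous fun s => √(h s ^ 2 + w s ^ 2 * c s) / c s :=
    ((hh.pow 2).add ((hw.pow 2).mul hc)).sqrt.div hc hc0'
  rw [← intervalIntegral.integral_add (hhc.intervalIntegrable a b) (hsqrt.intervalIntegrable a b)]
  exact intervalIntegral.integral_nonneg hab fun s _ => div_add_sqrt_sq_add_div_nonneg (hc0 s)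

theorem integral_sqrt_div_le (hab : a ≤ b)
    (hh : Continuous h) (hw : Continuous w) (hc : Continuous c) (hc0 : ∀ s, 0 < c s) :
    ∫ s in a..b, √(h s ^ 2 + w s ^ 2 * c s) / c s ≤
      √(((∫ s in a..b, h s ^ 2 / c s) + ∫ s in a..b, w s ^ 2) * ∫ s in a..b, 1 / c s) := by
  have hc0' : ∀ s, c s ≠ 0 := fun s => (hc0 s).ne'
  have hh2c : Continuous fun s => h s ^ 2 / c s := (hh.pow 2).div hc hc0'
  have hinvc : Continuous fun s => 1 / c s := continuous_const.div hc hc0'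
  have hw2 : Continuous fun s => w s ^ 2 := hw.pow 2
  have sq_sqrt_first : ∫ s in a..b, √(h s ^ 2 / c s + w s ^ 2) ^ 2 =
      (∫ s in a..b, h s ^ 2 / c s) + ∫ s in a..b, w s ^ 2 := by
    rw [← intervalIntegral.integral_add (hh2c.intervalIntegrable a b)
      (hw2.intervalIntegrable a b)]
    exact intervalIntegral.integral_congr fun s _ => Real.sq_sqrt (by positivity [hc0 s])
  have sq_sqrt_second : ∫ s in a..b, √(1 / c s) ^ 2 = ∫ s in a..b, 1 / c s :=
    intervalIntegral.integral_congr fun s _ => Real.sq_sqrt (by positivity [hc0 s])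
  calc ∫ s in a..b, √(h s ^ 2 + w s ^ 2 * c s) / c s
      = ∫ s in a..b, √(h s ^ 2 / c s + w s ^ 2) * √(1 / c s) :=
        intervalIntegral.integral_congr fun s _ => sqrt_sq_add_mul_div_eq (hc0 s)
    _ ≤ _ := intervalIntegral_mul_le_sqrt_integral_sq_mul hab (hh2c.add hw2).sqrt
        hinvc.sqrt (fun _ => Real.sqrt_nonneg _) (fun _ => Real.sqrt_nonneg _)
    _ = _ := by rw [sq_sqrt_first, sq_sqrt_second]

end ArrivalTime

theorem stmt_5_general (N : ℕ)
    (δ : EuclideanSpace ℝ (Fin N) → EuclideanSpace ℝ (Fin N))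
    (β : EuclideanSpace ℝ (Fin N) → ℝ)
    (hδ : Continuous δ) (hβ : Continuous β) (hβpos : ∀ y, 0 < β y)
    (x x' : ℝ → EuclideanSpace ℝ (Fin N))
    (hx : ∀ s, HasDerivAt x (x' s) s) (hx' : Continuous x') :
    ∀ h : ℝ → ℝ, (∀ s, h s = ⟪δ (x s), x' s⟫) →
    ∀ T Ttilde : ℝ,
      T = (∫ s in (0:ℝ)..1, h s / β (x s))
        + (∫ s in (0:ℝ)..1, Real.sqrt (h s ^ 2 + ‖x' s‖ ^ 2 * β (x s)) / β (x s)) →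
      Ttilde = (∫ s in (0:ℝ)..1, h s / β (x s))
        + Real.sqrt (((∫ s in (0:ℝ)..1, h s ^ 2 / β (x s)) + ∫ s in (0:ℝ)..1, ‖x' s‖ ^ 2)
            * ∫ s in (0:ℝ)..1, 1 / β (x s)) →
      0 ≤ T ∧ T ≤ Ttilde := by
  intro h hh T Ttilde hT hTt
  have hxc : Continuous x := continuous_iff_continuousAt.2 fun s => (hx s).continuousAt
  have hhc : Continuous h := by
    rw [funext hh]
    exact (hδ.comp hxc).inner hx'
  have hβx : Continuous fun s => β (x s) := hβ.comp hxc
  subst hT hTt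
  exact ⟨integral_div_add_integral_sqrt_div_nonneg zero_le_one hhc hx'.norm hβx (hβpos <| x ·),
    add_le_add_right (integral_sqrt_div_le zero_le_one hhc hx'.norm hβx (hβpos <| x ·)) _⟩

/-- Eq. (4.8) of the paper: with `h(s) = ⟨δ(x(s)),x'(s)⟩`, the arrival-time functional
`T(x) = ∫ h/β + ∫ √(h² + |x'|²β)/β` and the auxiliary quantity
`T̃(x) = ∫ h/β + √((∫ h²/β + ∫ |x'|²) ∫ 1/β)` satisfy `0 ≤ T(x) ≤ T̃(x)`. -/
theorem stmt_5 (N : ℕ) (hN : 1 ≤ N)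
    (δ : EuclideanSpace ℝ (Fin N) → EuclideanSpace ℝ (Fin N))
    (β : EuclideanSpace ℝ (Fin N) → ℝ)
    (hδ : Continuous δ) (hβ : Continuous β) (hβpos : ∀ y, 0 < β y)
    (x x' : ℝ → EuclideanSpace ℝ (Fin N))
    (hx : ∀ s, HasDerivAt x (x' s) s) (hx' : Continuous x') :
    ∀ h : ℝ → ℝ, (∀ s, h s = ⟪δ (x s), x' s⟫) →
    ∀ T Ttilde : ℝ,
      T = (∫ s in (0:ℝ)..1, h s / β (x s))
        + (∫ s in (0:ℝ)..1, Real.sqrt (h s ^ 2 + ‖x' s‖ ^ 2 * β (x s)) / β (x s)) →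
      Ttilde = (∫ s in (0:ℝ)..1, h s / β (x s))
        + Real.sqrt (((∫ s in (0:ℝ)..1, h s ^ 2 / β (x s)) + ∫ s in (0:ℝ)..1, ‖x' s‖ ^ 2)
            * ∫ s in (0:ℝ)..1, 1 / β (x s)) →
      0 ≤ T ∧ T ≤ Ttilde :=
  stmt_5_general N δ β hδ hβ hβpos x x' hx hx'
end

section
/- Fix N ≥ 1, continuous maps δ : ℝ^N → ℝ^N and β : ℝ^N → ℝ with β > 0 everywhere, Δ_t ∈ ℝ, constants 0 < b₁ ≤ b₂ and D ≥ 0, and a C¹ curve x : [0,1] → ℝ^N such that b₁ ≤ β(x(s)) ≤ b₂ and |δ(x(s))| ≤ D for all s ∈ [0,1]. Then 2𝒥(x) ≥ ∫₀¹|x'|² ds − 2|Δ_t| (D b₂ / b₁) (∫₀¹|x'|² ds)^{1/2} − Δ_t² b₂. -/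
open Real Set RealInnerProductSpace

/-!
Write `A = ∫|x'|²`, `P = ∫h²/β`, `Q = ∫h/β` and `R = ∫1/β`, so that
`2𝒥 = A + (P - Q²/R) - Δ_t²/R + 2Δ_t Q/R`. The bracket `P - Q²/R` is nonnegative by the
Cauchy–Schwarz inequality for the weight `1/β`; `1/R ≤ b₂` since `1/β ≥ 1/b₂`; and
`|Q| ≤ (D/b₁) ∫|x'| ≤ (D/b₁) √A` by `|h| ≤ D|x'|` and Cauchy–Schwarz once more.
-/

open intervalIntegral
open MeasureTheory (volume ae_of_all)

/-- Weighted Cauchy–Schwarz; with `0⁻¹ = 0` it also holds, trivially, when `∫ w = 0`. -/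
theorem sq_integral_mul_mul_inv_integral_le {f w : ℝ → ℝ} {a b : ℝ} (hab : a ≤ b)
    (hw : ∀ s ∈ Icc a b, 0 ≤ w s)
    (hf2w : IntervalIntegrable (fun s => f s ^ 2 * w s) volume a b)
    (hfw : IntervalIntegrable (fun s => f s * w s) volume a b)
    (hw_int : IntervalIntegrable w volume a b) :
    (∫ s in a..b, f s * w s) ^ 2 * (∫ s in a..b, w s)⁻¹ ≤
      ∫ s in a..b, f s ^ 2 * w s := by
  set P := ∫ s in a..b, f s ^ 2 * w s
  set Q := ∫ s in a..b, f s * w s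
  set R := ∫ s in a..b, w s
  set t := Q * R⁻¹
  -- `∫ (f - t)² w ≥ 0` is a quadratic in `t`, minimal at `t = Q / R`.
  have hquad : ∫ s in a..b, (f s - t) ^ 2 * w s = P - 2 * t * Q + t ^ 2 * R := by
    have hexpand : ∀ s,
        (f s - t) ^ 2 * w s = f s ^ 2 * w s - 2 * t * (f s * w s) + t ^ 2 * w s :=
      fun s => by ring
    simp_rw [hexpand]
    rw [integral_add (hf2w.sub (hfw.const_mul _)) (hw_int.const_mul _),
      integral_sub hf2w (hfw.const_mul _), integral_const_mul, integral_const_mul]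
  have hnonneg : 0 ≤ ∫ s in a..b, (f s - t) ^ 2 * w s :=
    integral_nonneg hab fun s hs => mul_nonneg (sq_nonneg _) (hw s hs)
  have htR : t ^ 2 * R = Q ^ 2 * R⁻¹ := by
    calc t ^ 2 * R = Q ^ 2 * (R⁻¹ * R⁻¹⁻¹ * R⁻¹) := by rw [inv_inv]; ring
      _ = Q ^ 2 * R⁻¹ := by rw [mul_inv_mul_cancel]
  have htQ : t * Q = Q ^ 2 * R⁻¹ := by ring
  linarith

theorem integral_le_sqrt_integral_sq {f : ℝ → ℝ}
    (hf : IntervalIntegrable f volume 0 1)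
    (hf2 : IntervalIntegrable (fun s => f s ^ 2) volume 0 1) :
    ∫ s in (0:ℝ)..1, f s ≤ √(∫ s in (0:ℝ)..1, f s ^ 2) := by
  have hCS := sq_integral_mul_mul_inv_integral_le (f := f) (w := fun _ => 1) zero_le_one
    (fun _ _ => zero_le_one) (by simpa using hf2) (by simpa using hf) intervalIntegrable_const
  simp only [mul_one, integral_const, sub_zero, smul_eq_mul, inv_one] at hCS
  exact (le_abs_self _).trans (Real.abs_le_sqrt hCS)

theorem inv_integral_one_div_le {g : ℝ → ℝ} {c : ℝ}
    (hg : IntervalIntegrable (fun s => 1 / g s) volume 0 1)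
    (hpos : ∀ s ∈ Icc (0:ℝ) 1, 0 < g s) (hle : ∀ s ∈ Icc (0:ℝ) 1, g s ≤ c) :
    (∫ s in (0:ℝ)..1, 1 / g s)⁻¹ ≤ c := by
  have h0 : (0:ℝ) ∈ Icc (0:ℝ) 1 := left_mem_Icc.2 zero_le_one
  refine inv_le_of_inv_le₀ ((hpos 0 h0).trans_le (hle 0 h0)) ?_
  calc c⁻¹ = ∫ _ in (0:ℝ)..1, 1 / c := by simp
    _ ≤ ∫ s in (0:ℝ)..1, 1 / g s :=
      integral_mono_on zero_le_one intervalIntegrable_const hg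
        fun s hs => one_div_le_one_div_of_le (hpos s hs) (hle s hs)

theorem abs_integral_inner_div_le {E : Type*} [NormedAddCommGroup E] [InnerProductSpace ℝ E]
    {u v : ℝ → E} {g : ℝ → ℝ} {a b D m : ℝ} (hab : a ≤ b) (hm : 0 < m)
    (hv : IntervalIntegrable (fun s => ‖v s‖) volume a b)
    (hu : ∀ s ∈ Icc a b, ‖u s‖ ≤ D) (hg : ∀ s ∈ Icc a b, m ≤ g s) :
    |∫ s in a..b, ⟪u s, v s⟫ / g s| ≤ D / m * ∫ s in a..b, ‖v s‖ := by
  rw [← integral_const_mul, ← Real.norm_eq_abs]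
  refine norm_integral_le_of_norm_le hab (ae_of_all _ fun s hs => ?_) (hv.const_mul _)
  have hs' : s ∈ Icc a b := Ioc_subset_Icc_self hs
  have hgs : 0 < g s := hm.trans_le (hg s hs')
  calc ‖⟪u s, v s⟫ / g s‖ = |⟪u s, v s⟫| / g s := by
        rw [Real.norm_eq_abs, abs_div, abs_of_pos hgs]
    _ ≤ D * ‖v s‖ / m :=
        div_le_div₀ (mul_nonneg ((norm_nonneg _).trans (hu s hs')) (norm_nonneg _))
          ((abs_real_inner_le_norm _ _).trans
            (mul_le_mul_of_nonneg_right (hu s hs') (norm_nonneg _))) hm (hg s hs')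
    _ = D / m * ‖v s‖ := by ring

theorem stmt_7_general (N : ℕ)
    (δ : EuclideanSpace ℝ (Fin N) → EuclideanSpace ℝ (Fin N))
    (β : EuclideanSpace ℝ (Fin N) → ℝ)
    (hδ : Continuous δ) (hβ : Continuous β) (hβpos : ∀ y, 0 < β y)
    (Δt : ℝ) (b₁ b₂ D : ℝ) (hb₁ : 0 < b₁) (hD : 0 ≤ D)
    (x x' : ℝ → EuclideanSpace ℝ (Fin N))
    (hx : ∀ s, HasDerivAt x (x' s) s) (hx' : Continuous x')
    (hβb : ∀ s ∈ Set.Icc (0:ℝ) 1, b₁ ≤ β (x s) ∧ β (x s) ≤ b₂)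
    (hδb : ∀ s ∈ Set.Icc (0:ℝ) 1, ‖δ (x s)‖ ≤ D) :
    ∀ h : ℝ → ℝ, (∀ s, h s = ⟪δ (x s), x' s⟫) →
    ∀ J : ℝ, J = (1/2) * (∫ s in (0:ℝ)..1, ‖x' s‖ ^ 2)
        + (1/2) * ((∫ s in (0:ℝ)..1, h s ^ 2 / β (x s))
          - (∫ s in (0:ℝ)..1, h s / β (x s)) ^ 2 * (∫ s in (0:ℝ)..1, 1 / β (x s))⁻¹)
        - (Δt / 2) * (Δt - 2 * ∫ s in (0:ℝ)..1, h s / β (x s))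
          * (∫ s in (0:ℝ)..1, 1 / β (x s))⁻¹ →
    (∫ s in (0:ℝ)..1, ‖x' s‖ ^ 2)
        - 2 * |Δt| * (D * b₂ / b₁) * Real.sqrt (∫ s in (0:ℝ)..1, ‖x' s‖ ^ 2)
        - Δt ^ 2 * b₂ ≤ 2 * J := by
  intro h hh J hJ
  obtain rfl : h = fun s => ⟪δ (x s), x' s⟫ := funext hh
  have hx_cont : Continuous x := continuous_iff_continuousAt.2 fun s => (hx s).continuousAt
  have hh_cont : Continuous fun s => ⟪δ (x s), x' s⟫ := (hδ.comp hx_cont).inner hx'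
  have hw_cont : Continuous fun s => 1 / β (x s) :=
    continuous_const.div (hβ.comp hx_cont) fun s => (hβpos _).ne'
  set A := ∫ s in (0:ℝ)..1, ‖x' s‖ ^ 2
  set P := ∫ s in (0:ℝ)..1, ⟪δ (x s), x' s⟫ ^ 2 / β (x s)
  set Q := ∫ s in (0:ℝ)..1, ⟪δ (x s), x' s⟫ / β (x s)
  set R := ∫ s in (0:ℝ)..1, 1 / β (x s)
  have hCS : Q ^ 2 * R⁻¹ ≤ P := by
    simpa only [mul_one_div] using sq_integral_mul_mul_inv_integral_le zero_le_one
      (fun s _ => (one_div_pos.2 (hβpos (x s))).le)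
      (((hh_cont.pow 2).mul hw_cont).intervalIntegrable _ _)
      ((hh_cont.mul hw_cont).intervalIntegrable _ _) (hw_cont.intervalIntegrable _ _)
  have hR_nonneg : 0 ≤ R⁻¹ :=
    inv_nonneg.2 (integral_nonneg zero_le_one fun s _ => (one_div_pos.2 (hβpos (x s))).le)
  have hR_le : R⁻¹ ≤ b₂ :=
    inv_integral_one_div_le (hw_cont.intervalIntegrable _ _) (fun s _ => hβpos (x s))
      fun s hs => (hβb s hs).2
  have hQ : |Q| ≤ D / b₁ * √A :=
    (abs_integral_inner_div_le zero_le_one hb₁ (hx'.norm.intervalIntegrable _ _) hδb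
      fun s hs => (hβb s hs).1).trans <| mul_le_mul_of_nonneg_left
        (integral_le_sqrt_integral_sq (hx'.norm.intervalIntegrable _ _)
          ((hx'.norm.pow 2).intervalIntegrable _ _)) (div_nonneg hD hb₁.le)
  have hcross : |Δt| * |Q| * R⁻¹ ≤ |Δt| * (D / b₁ * √A) * b₂ := by gcongr
  have hcoef : 2 * |Δt| * (D * b₂ / b₁) * √A = 2 * (|Δt| * (D / b₁ * √A) * b₂) := by
    ring
  rw [hJ, hcoef]
  linarith [mul_le_mul_of_nonneg_left hR_le (sq_nonneg Δt),
    mul_le_mul_of_nonneg_right (abs_mul Δt Q ▸ neg_abs_le (Δt * Q)) hR_nonneg]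

/-- Claim 1 of the proof of Theorem 4.2 of the paper: if along the curve `x` one has
`b₁ ≤ β(x(s)) ≤ b₂` and `|δ(x(s))| ≤ D`, then the restricted action `𝒥(x)` of eq. (4.5)
satisfies `2𝒥(x) ≥ ∫|x'|² − 2|Δ_t| (D b₂/b₁) (∫|x'|²)^{1/2} − Δ_t² b₂`. -/
theorem stmt_7 (N : ℕ) (hN : 1 ≤ N)
    (δ : EuclideanSpace ℝ (Fin N) → EuclideanSpace ℝ (Fin N))
    (β : EuclideanSpace ℝ (Fin N) → ℝ)
    (hδ : Continuous δ) (hβ : Continuous β) (hβpos : ∀ y, 0 < β y)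
    (Δt : ℝ) (b₁ b₂ D : ℝ) (hb₁ : 0 < b₁) (hb₁₂ : b₁ ≤ b₂) (hD : 0 ≤ D)
    (x x' : ℝ → EuclideanSpace ℝ (Fin N))
    (hx : ∀ s, HasDerivAt x (x' s) s) (hx' : Continuous x')
    (hβb : ∀ s ∈ Set.Icc (0:ℝ) 1, b₁ ≤ β (x s) ∧ β (x s) ≤ b₂)
    (hδb : ∀ s ∈ Set.Icc (0:ℝ) 1, ‖δ (x s)‖ ≤ D) :
    ∀ h : ℝ → ℝ, (∀ s, h s = ⟪δ (x s), x' s⟫) →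
    ∀ J : ℝ, J = (1/2) * (∫ s in (0:ℝ)..1, ‖x' s‖ ^ 2)
        + (1/2) * ((∫ s in (0:ℝ)..1, h s ^ 2 / β (x s))
          - (∫ s in (0:ℝ)..1, h s / β (x s)) ^ 2 * (∫ s in (0:ℝ)..1, 1 / β (x s))⁻¹)
        - (Δt / 2) * (Δt - 2 * ∫ s in (0:ℝ)..1, h s / β (x s))
          * (∫ s in (0:ℝ)..1, 1 / β (x s))⁻¹ →
    (∫ s in (0:ℝ)..1, ‖x' s‖ ^ 2)
        - 2 * |Δt| * (D * b₂ / b₁) * Real.sqrt (∫ s in (0:ℝ)..1, ‖x' s‖ ^ 2)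
        - Δt ^ 2 * b₂ ≤ 2 * J :=
  stmt_7_general N δ β hδ hβ hβpos Δt b₁ b₂ D hb₁ hD x x' hx hx' hβb hδb
end

section
/- Fix N ≥ 1, continuous maps δ : ℝ^N → ℝ^N and β : ℝ^N → ℝ with β > 0 everywhere, Δ_t ∈ ℝ, t_p ∈ ℝ, and a C¹ curve x : [0,1] → ℝ^N; write h(s) = ⟨δ(x(s)),x'(s)⟩ and set C = (∫₀¹ h/β(x) ds − Δ_t)(∫₀¹ 1/β(x) ds)^{-1} and t(s) = t_p + ∫₀^s (h(r) − C)/β(x(r)) dr. Then: (i) t(1) − t(0) = Δ_t; (ii) ⟨δ(x(s)),x'(s)⟩ − β(x(s)) t'(s) = C for all s; (iii) the action of the curve z = (x,t) for the standard stationary metric equals the restricted functional, i.e. (1/2)∫₀¹ (|x'|² + 2 h t' − β(x) (t')²) ds = 𝒥(x). -/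
/-!
The lift is chosen so that `t' = (h − C)/β(x)`; the constant `C` is then the unique value for
which `∫₀¹ t' = Δ_t`, which is where its formula comes from. Substituting `t'` into the
Lagrangian `|x'|² + 2 h t' − β(x) t'²` gives `|x'|² + h²/β(x) − C²/β(x)` pointwise, so the
action is `½(∫|x'|² + ∫h²/β − C² ∫1/β)`, and expanding `C²` yields `𝒥(x)`.
-/

open Set RealInnerProductSpace MeasureTheory intervalIntegral

theorem integral_one_div_pos_of_pos {b : ℝ → ℝ} (hb : Continuous b) (hpos : ∀ s, 0 < b s)
    {a c : ℝ} (hac : a < c) : 0 < ∫ s in a..c, 1 / b s :=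
  intervalIntegral_pos_of_pos_on
    ((continuous_const.div hb fun s => (hpos s).ne').intervalIntegrable a c)
    (fun s _ => one_div_pos.2 (hpos s)) hac

section Lift

variable {h b : ℝ → ℝ} {a c : ℝ}

theorem integral_sub_const_div (hhb : IntervalIntegrable (fun s => h s / b s) volume a c)
    (hb : IntervalIntegrable (fun s => 1 / b s) volume a c) (C : ℝ) :
    ∫ s in a..c, (h s - C) / b s = (∫ s in a..c, h s / b s) - C * ∫ s in a..c, 1 / b s := by
  simp_rw [sub_div, div_eq_mul_one_div C]
  rw [integral_sub hhb (hb.const_mul C), intervalIntegral.integral_const_mul]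

theorem integral_sub_const_div_eq_of_const_eq
    (hhb : IntervalIntegrable (fun s => h s / b s) volume a c)
    (hb : IntervalIntegrable (fun s => 1 / b s) volume a c)
    (hB : ∫ s in a..c, 1 / b s ≠ 0) {Δ C : ℝ}
    (hC : C = ((∫ s in a..c, h s / b s) - Δ) * (∫ s in a..c, 1 / b s)⁻¹) :
    ∫ s in a..c, (h s - C) / b s = Δ := by
  rw [integral_sub_const_div hhb hb, hC, mul_assoc, inv_mul_cancel₀ hB]
  ring

theorem lagrangian_lift_eq (v h b C : ℝ) (hb : b ≠ 0) :
    v + 2 * h * ((h - C) / b) - b * ((h - C) / b) ^ 2 = v + h ^ 2 / b - C ^ 2 * (1 / b) := by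
  field_simp
  ring

theorem integral_lagrangian_lift {q : ℝ → ℝ} (hq : IntervalIntegrable q volume a c)
    (hh2b : IntervalIntegrable (fun s => h s ^ 2 / b s) volume a c)
    (hb : IntervalIntegrable (fun s => 1 / b s) volume a c) (hb0 : ∀ s ∈ uIcc a c, b s ≠ 0)
    (C : ℝ) :
    ∫ s in a..c, (q s + 2 * h s * ((h s - C) / b s) - b s * ((h s - C) / b s) ^ 2)
      = (∫ s in a..c, q s) + (∫ s in a..c, h s ^ 2 / b s) - C ^ 2 * ∫ s in a..c, 1 / b s := by
  rw [integral_congr fun s hs => lagrangian_lift_eq (q s) (h s) (b s) C (hb0 s hs),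
    integral_sub (hq.add hh2b) (hb.const_mul _), integral_add hq hh2b,
    intervalIntegral.integral_const_mul]

end Lift

theorem stmt_11_general (N : ℕ)
    (δ : EuclideanSpace ℝ (Fin N) → EuclideanSpace ℝ (Fin N))
    (β : EuclideanSpace ℝ (Fin N) → ℝ)
    (hδ : Continuous δ) (hβ : Continuous β) (hβpos : ∀ y, 0 < β y)
    (Δt t_p : ℝ)
    (x x' : ℝ → EuclideanSpace ℝ (Fin N))
    (hx : ∀ s, HasDerivAt x (x' s) s) (hx' : Continuous x') :
    ∀ h : ℝ → ℝ, (∀ s, h s = ⟪δ (x s), x' s⟫) →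
    ∀ C : ℝ, C = ((∫ s in (0:ℝ)..1, h s / β (x s)) - Δt)
        * (∫ s in (0:ℝ)..1, 1 / β (x s))⁻¹ →
    ∀ t : ℝ → ℝ, (∀ s, t s = t_p + ∫ r in (0:ℝ)..s, (h r - C) / β (x r)) →
    -- (i) the lift joins the prescribed time levels
    (t 1 - t 0 = Δt) ∧
    -- (ii) the conservation law `⟨δ(x),x'⟩ − β(x) t' = C`
    (∀ s, HasDerivAt t ((h s - C) / β (x s)) s) ∧
    (∀ s, ⟪δ (x s), x' s⟫ - β (x s) * ((h s - C) / β (x s)) = C) ∧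
    -- (iii) the action of `z = (x,t)` equals the restricted functional `𝒥(x)`
    ((1/2) * (∫ s in (0:ℝ)..1,
        (‖x' s‖ ^ 2 + 2 * h s * ((h s - C) / β (x s))
          - β (x s) * ((h s - C) / β (x s)) ^ 2))
      = (1/2) * (∫ s in (0:ℝ)..1, ‖x' s‖ ^ 2)
        + (1/2) * ((∫ s in (0:ℝ)..1, h s ^ 2 / β (x s))
          - (∫ s in (0:ℝ)..1, h s / β (x s)) ^ 2 * (∫ s in (0:ℝ)..1, 1 / β (x s))⁻¹)
        - (Δt / 2) * (Δt - 2 * ∫ s in (0:ℝ)..1, h s / β (x s))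
          * (∫ s in (0:ℝ)..1, 1 / β (x s))⁻¹) := by
  intro h hh C hC t ht
  have hxc : Continuous x := continuous_iff_continuousAt.2 fun s => (hx s).continuousAt
  have hhc : Continuous h := funext hh ▸ (hδ.comp hxc).inner hx'
  have hbc : Continuous fun s => β (x s) := hβ.comp hxc
  have hb0 : ∀ s, β (x s) ≠ 0 := fun s => (hβpos _).ne'
  have hhb : IntervalIntegrable (fun s => h s / β (x s)) volume 0 1 :=
    (hhc.div hbc hb0).intervalIntegrable 0 1
  have hb : IntervalIntegrable (fun s => 1 / β (x s)) volume 0 1 :=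
    (continuous_const.div hbc hb0).intervalIntegrable 0 1
  have hB := (integral_one_div_pos_of_pos hbc (fun s => hβpos _) zero_lt_one).ne'
  refine ⟨?_, fun s => ?_, fun s => ?_, ?_⟩
  · rw [ht 1, ht 0, integral_same, add_zero, add_sub_cancel_left]
    exact integral_sub_const_div_eq_of_const_eq hhb hb hB hC
  · exact funext ht ▸ (((hhc.sub continuous_const).div hbc hb0).integral_hasStrictDerivAt
      0 s).hasDerivAt.const_add t_p
  · rw [← hh s, mul_div_cancel₀ _ (hb0 s), sub_sub_cancel]
  · have hq : IntervalIntegrable (fun s => ‖x' s‖ ^ 2) volume 0 1 :=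
      (hx'.norm.pow 2).intervalIntegrable 0 1
    rw [integral_lagrangian_lift hq
      (((hhc.pow 2).div hbc hb0).intervalIntegrable 0 1) hb (fun s _ => hb0 s), hC]
    field_simp
    ring

/-- Coordinate form of the variational reduction (eqs. (4.2)–(4.5)) of the paper: with
`h(s) = ⟨δ(x(s)),x'(s)⟩`, `C = (∫ h/β − Δ_t)(∫ 1/β)⁻¹` and
`t(s) = t_p + ∫₀^s (h − C)/β(x)`, the lift `t` joins the prescribed time levels
(`t(1) − t(0) = Δ_t`), satisfies the conservation law `⟨δ(x),x'⟩ − β(x) t' ≡ C`, and the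
action of `z = (x,t)` for the standard stationary metric equals the restricted functional
`𝒥(x)` of eq. (4.5). -/
theorem stmt_11 (N : ℕ) (hN : 1 ≤ N)
    (δ : EuclideanSpace ℝ (Fin N) → EuclideanSpace ℝ (Fin N))
    (β : EuclideanSpace ℝ (Fin N) → ℝ)
    (hδ : Continuous δ) (hβ : Continuous β) (hβpos : ∀ y, 0 < β y)
    (Δt t_p : ℝ)
    (x x' : ℝ → EuclideanSpace ℝ (Fin N))
    (hx : ∀ s, HasDerivAt x (x' s) s) (hx' : Continuous x') :
    ∀ h : ℝ → ℝ, (∀ s, h s = ⟪δ (x s), x' s⟫) →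
    ∀ C : ℝ, C = ((∫ s in (0:ℝ)..1, h s / β (x s)) - Δt)
        * (∫ s in (0:ℝ)..1, 1 / β (x s))⁻¹ →
    ∀ t : ℝ → ℝ, (∀ s, t s = t_p + ∫ r in (0:ℝ)..s, (h r - C) / β (x r)) →
    -- (i) the lift joins the prescribed time levels
    (t 1 - t 0 = Δt) ∧
    -- (ii) the conservation law `⟨δ(x),x'⟩ − β(x) t' = C`
    (∀ s, HasDerivAt t ((h s - C) / β (x s)) s) ∧
    (∀ s, ⟪δ (x s), x' s⟫ - β (x s) * ((h s - C) / β (x s)) = C) ∧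
    -- (iii) the action of `z = (x,t)` equals the restricted functional `𝒥(x)`
    ((1/2) * (∫ s in (0:ℝ)..1,
        (‖x' s‖ ^ 2 + 2 * h s * ((h s - C) / β (x s))
          - β (x s) * ((h s - C) / β (x s)) ^ 2))
      = (1/2) * (∫ s in (0:ℝ)..1, ‖x' s‖ ^ 2)
        + (1/2) * ((∫ s in (0:ℝ)..1, h s ^ 2 / β (x s))
          - (∫ s in (0:ℝ)..1, h s / β (x s)) ^ 2 * (∫ s in (0:ℝ)..1, 1 / β (x s))⁻¹)
        - (Δt / 2) * (Δt - 2 * ∫ s in (0:ℝ)..1, h s / β (x s))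
          * (∫ s in (0:ℝ)..1, 1 / β (x s))⁻¹) :=
  stmt_11_general N δ β hδ hβ hβpos Δt t_p x x' hx hx'
end

section
/- Let D = {(u,0) ∈ ℝ² : −1 ≤ u ≤ 1} and let x = (x₁,x₂) : [0,1] → ℝ² \ D be a C¹ curve with x(0) = (0,−1) and x(1) = (0,1). Then there exist s₁, s₂ ∈ [0,1] with x₁'(s₁) > 0 and x₁'(s₂) < 0. Consequently, for every continuous function λ : ℝ² \ D → ℝ with λ > 0 everywhere, the function s ↦ λ(x(s)) x₁'(s) takes both positive and negative values; in particular it is not of constant sign, not identically zero, and not constant. -/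
/-!
Along the curve the second coordinate goes from `-1` to `1`, so by the intermediate value
theorem it vanishes at some interior time `s₀`; since the curve avoids `D`, there `|x₁(s₀)| > 1`.
As `x₁(0) = x₁(1) = 0`, the mean value theorem on `[0, s₀]` and `[s₀, 1]` produces slopes of
`x₁` of both signs.
-/

open Real Set

section SignChange

variable {f f' : ℝ → ℝ} {a b : ℝ}

lemma exists_pos_hasDerivAt_of_lt (hab : a < b) (hf : ∀ t ∈ Icc a b, HasDerivAt f (f' t) t)
    (h : f a < f b) : ∃ s ∈ Ioo a b, 0 < f' s := by
  obtain ⟨s, hs, hslope⟩ := exists_hasDerivAt_eq_slope f f' hab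
    (fun t ht => (hf t ht).continuousAt.continuousWithinAt)
    (fun t ht => hf t (Ioo_subset_Icc_self ht))
  exact ⟨s, hs, hslope ▸ div_pos (sub_pos.2 h) (sub_pos.2 hab)⟩

lemma exists_neg_hasDerivAt_of_lt (hab : a < b) (hf : ∀ t ∈ Icc a b, HasDerivAt f (f' t) t)
    (h : f b < f a) : ∃ s ∈ Ioo a b, f' s < 0 := by
  obtain ⟨s, hs, hpos⟩ := exists_pos_hasDerivAt_of_lt (f := -f) (f' := -f') hab
    (fun t ht => (hf t ht).neg) (neg_lt_neg h)
  exact ⟨s, hs, neg_pos.1 hpos⟩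

lemma exists_hasDerivAt_pos_and_neg_of_eq {c : ℝ} (hc : c ∈ Ioo a b)
    (hf : ∀ t ∈ Icc a b, HasDerivAt f (f' t) t) (hab : f a = f b) (hfc : f c ≠ f a) :
    (∃ s ∈ Ioo a b, 0 < f' s) ∧ ∃ s ∈ Ioo a b, f' s < 0 := by
  have hleft : ∀ t ∈ Icc a c, HasDerivAt f (f' t) t :=
    fun t ht => hf t (Icc_subset_Icc_right hc.2.le ht)
  have hright : ∀ t ∈ Icc c b, HasDerivAt f (f' t) t :=
    fun t ht => hf t (Icc_subset_Icc_left hc.1.le ht)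
  have hIoo_left : Ioo a c ⊆ Ioo a b := Ioo_subset_Ioo_right hc.2.le
  have hIoo_right : Ioo c b ⊆ Ioo a b := Ioo_subset_Ioo_left hc.1.le
  rcases hfc.lt_or_gt with hlt | hgt
  · obtain ⟨s₁, hs₁, hneg⟩ := exists_neg_hasDerivAt_of_lt hc.1 hleft hlt
    obtain ⟨s₂, hs₂, hpos⟩ := exists_pos_hasDerivAt_of_lt hc.2 hright (hab ▸ hlt)
    exact ⟨⟨s₂, hIoo_right hs₂, hpos⟩, s₁, hIoo_left hs₁, hneg⟩
  · obtain ⟨s₁, hs₁, hpos⟩ := exists_pos_hasDerivAt_of_lt hc.1 hleft hgt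
    obtain ⟨s₂, hs₂, hneg⟩ := exists_neg_hasDerivAt_of_lt hc.2 hright (hab ▸ hgt)
    exact ⟨⟨s₁, hIoo_left hs₁, hpos⟩, s₂, hIoo_right hs₂, hneg⟩

end SignChange

lemma exists_mem_Ioo_fst_ne_zero_of_avoids_slit {γ : ℝ → ℝ × ℝ}
    (hγ : ContinuousOn γ (Icc 0 1))
    (hD : ∀ s ∈ Icc (0 : ℝ) 1, γ s ∉ {p : ℝ × ℝ | p.2 = 0 ∧ -1 ≤ p.1 ∧ p.1 ≤ 1})
    (h0 : (γ 0).2 = -1) (h1 : (γ 1).2 = 1) :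
    ∃ s ∈ Ioo (0 : ℝ) 1, (γ s).1 ≠ 0 := by
  have hzero : (0 : ℝ) ∈ Ioo (γ 0).2 (γ 1).2 := by
    rw [h0, h1]; norm_num
  obtain ⟨s, hs, hs0⟩ := intermediate_value_Ioo zero_le_one (continuous_snd.comp_continuousOn hγ)
    hzero
  refine ⟨s, hs, fun hfst => hD s (Ioo_subset_Icc_self hs) ?_⟩
  simp only [Function.comp_apply] at hs0
  simp [hs0, hfst]

theorem stmt_14_general (x x' : ℝ → ℝ × ℝ)
    (hx : ∀ s, HasDerivAt x (x' s) s)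
    (hD : ∀ s ∈ Set.Icc (0:ℝ) 1,
      x s ∉ {p : ℝ × ℝ | p.2 = 0 ∧ -1 ≤ p.1 ∧ p.1 ≤ 1})
    (h0 : x 0 = (0, -1)) (h1 : x 1 = (0, 1)) :
    ((∃ s₁ ∈ Set.Icc (0:ℝ) 1, 0 < (x' s₁).1) ∧
      (∃ s₂ ∈ Set.Icc (0:ℝ) 1, (x' s₂).1 < 0)) ∧
    ∀ lam : ℝ × ℝ → ℝ,
      ContinuousOn lam {p : ℝ × ℝ | p.2 = 0 ∧ -1 ≤ p.1 ∧ p.1 ≤ 1}ᶜ →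
      (∀ p ∉ {p : ℝ × ℝ | p.2 = 0 ∧ -1 ≤ p.1 ∧ p.1 ≤ 1}, 0 < lam p) →
      ((∃ s₁ ∈ Set.Icc (0:ℝ) 1, 0 < lam (x s₁) * (x' s₁).1) ∧
        (∃ s₂ ∈ Set.Icc (0:ℝ) 1, lam (x s₂) * (x' s₂).1 < 0) ∧
        ¬ (∀ s ∈ Set.Icc (0:ℝ) 1, lam (x s) * (x' s).1 = 0) ∧
        ¬ (∃ c : ℝ, ∀ s ∈ Set.Icc (0:ℝ) 1, lam (x s) * (x' s).1 = c)) := by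
  obtain ⟨s₀, hs₀, hfst⟩ := exists_mem_Ioo_fst_ne_zero_of_avoids_slit
    (fun s _ => (hx s).continuousAt.continuousWithinAt) hD (by simp [h0]) (by simp [h1])
  obtain ⟨⟨s₁, hs₁, hpos⟩, s₂, hs₂, hneg⟩ := exists_hasDerivAt_pos_and_neg_of_eq
    (f := fun s => (x s).1) hs₀ (fun s _ => (hx s).fst) (by simp [h0, h1]) (by simpa [h0])
  replace hs₁ := Ioo_subset_Icc_self hs₁
  replace hs₂ := Ioo_subset_Icc_self hs₂
  refine ⟨⟨⟨s₁, hs₁, hpos⟩, s₂, hs₂, hneg⟩, fun lam _ hlam => ?_⟩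
  have hP : 0 < lam (x s₁) * (x' s₁).1 := mul_pos (hlam _ (hD s₁ hs₁)) hpos
  have hN : lam (x s₂) * (x' s₂).1 < 0 := mul_neg_of_pos_of_neg (hlam _ (hD s₂ hs₂)) hneg
  refine ⟨⟨s₁, hs₁, hP⟩, ⟨s₂, hs₂, hN⟩, fun h => hP.ne' (h s₁ hs₁), ?_⟩
  rintro ⟨c, hc⟩
  linarith [hc s₁ hs₁, hc s₂ hs₂]

/-- The core of counterexample (b) in Section 7 of the paper: along any `C¹` curve in
`ℝ² \ D`, `D = [−1,1] × {0}`, from `(0,−1)` to `(0,1)`, the derivative of the first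
coordinate takes both a positive and a negative value; consequently, for every continuous
`λ > 0` on `ℝ² \ D`, the function `s ↦ λ(x(s)) x₁'(s)` takes both positive and negative
values, and in particular it is not constant. -/
theorem stmt_14 (x x' : ℝ → ℝ × ℝ)
    (hx : ∀ s, HasDerivAt x (x' s) s) (hx' : Continuous x')
    (hD : ∀ s ∈ Set.Icc (0:ℝ) 1,
      x s ∉ {p : ℝ × ℝ | p.2 = 0 ∧ -1 ≤ p.1 ∧ p.1 ≤ 1})
    (h0 : x 0 = (0, -1)) (h1 : x 1 = (0, 1)) :
    ((∃ s₁ ∈ Set.Icc (0:ℝ) 1, 0 < (x' s₁).1) ∧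
      (∃ s₂ ∈ Set.Icc (0:ℝ) 1, (x' s₂).1 < 0)) ∧
    ∀ lam : ℝ × ℝ → ℝ,
      ContinuousOn lam {p : ℝ × ℝ | p.2 = 0 ∧ -1 ≤ p.1 ∧ p.1 ≤ 1}ᶜ →
      (∀ p ∉ {p : ℝ × ℝ | p.2 = 0 ∧ -1 ≤ p.1 ∧ p.1 ≤ 1}, 0 < lam p) →
      ((∃ s₁ ∈ Set.Icc (0:ℝ) 1, 0 < lam (x s₁) * (x' s₁).1) ∧
        (∃ s₂ ∈ Set.Icc (0:ℝ) 1, lam (x s₂) * (x' s₂).1 < 0) ∧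
        ¬ (∀ s ∈ Set.Icc (0:ℝ) 1, lam (x s) * (x' s).1 = 0) ∧
        ¬ (∃ c : ℝ, ∀ s ∈ Set.Icc (0:ℝ) 1, lam (x s) * (x' s).1 = c)) :=
  stmt_14_general x x' hx hD h0 h1
end

section
/- Define g : ℝ → ℝ by g(u) = −cos³u for u < π and g(u) = 1 for u ≥ π, and define δ : ℝ³ → ℝ³ by δ(x₁,x₂,x₃) = (g(x₁), 0, 0). Let x : [0,1] → ℝ³ be a C¹ curve with x(0) = (0,0,0) and x(1) = (3π/2, 0, 0). Then there exist s₁, s₂ ∈ [0,1] with ⟨δ(x(s₁)), x'(s₁)⟩ < 0 and ⟨δ(x(s₂)), x'(s₂)⟩ > 0. In particular, the function s ↦ ⟨δ(x(s)), x'(s)⟩ does not have constant sign, is not identically zero, and is not constant. -/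
/-!
Let `G` be a primitive of `g`, e.g. `G(u) = −(sin u − sin³u/3)` for `u < π` and `G(u) = u − π`
for `u ≥ π`. Along the curve, `⟨δ(x(s)), x'(s)⟩ = g(x₁(s)) x₁'(s)` is the derivative of
`G(x₁(s))`. Since `G(0) = 0`, `G(π/2) = −2/3` and `G(3π/2) = π/2`, the mean value theorem on
`[0, s₀]`, where `x₁(s₀) = π/2` by the intermediate value theorem, gives a negative value, and
on `[0, 1]` a positive one.
-/

open Real Set RealInnerProductSpace

theorem hasDerivAt_ite_lt {f₁ f₂ f₁' f₂' : ℝ → ℝ} {a : ℝ}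
    (h₁ : ∀ u ≤ a, HasDerivAt f₁ (f₁' u) u) (h₂ : ∀ u ≥ a, HasDerivAt f₂ (f₂' u) u)
    (ha : f₁ a = f₂ a) (ha' : f₁' a = f₂' a) (u : ℝ) :
    HasDerivAt (fun v => if v < a then f₁ v else f₂ v) (if u < a then f₁' u else f₂' u) u := by
  rcases lt_trichotomy u a with hu | rfl | hu
  · rw [if_pos hu]
    refine (h₁ u hu.le).congr_of_eventuallyEq ?_
    filter_upwards [Iio_mem_nhds hu] with v hv
    exact if_pos hv
  · rw [if_neg (lt_irrefl u)]
    have hle : HasDerivWithinAt (fun v => if v < u then f₁ v else f₂ v) (f₂' u) (Iic u) u := by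
      refine ha' ▸ (h₁ u le_rfl).hasDerivWithinAt.congr (fun v hv => ?_) (by simp [ha])
      rcases (mem_Iic.1 hv).lt_or_eq with hv | rfl
      · simp [hv]
      · simp [ha]
    have hge : HasDerivWithinAt (fun v => if v < u then f₁ v else f₂ v) (f₂' u) (Ici u) u :=
      (h₂ u le_rfl).hasDerivWithinAt.congr (fun v hv => by simp [not_lt.2 (mem_Ici.1 hv)])
        (by simp)
    simpa [Iic_union_Ici] using hle.union hge
  · rw [if_neg hu.not_gt]
    refine (h₂ u hu.le).congr_of_eventuallyEq ?_
    filter_upwards [Ioi_mem_nhds hu] with v hv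
    exact if_neg (mem_Ioi.1 hv).not_gt

theorem exists_mem_Ioo_neg_of_hasDerivAt {h h' : ℝ → ℝ} {a b : ℝ} (hab : a < b)
    (hd : ∀ s ∈ Icc a b, HasDerivAt h (h' s) s) (hlt : h b < h a) : ∃ c ∈ Ioo a b, h' c < 0 := by
  obtain ⟨c, hc, hslope⟩ := exists_hasDerivAt_eq_slope h h' hab
    (fun s hs => (hd s hs).continuousAt.continuousWithinAt)
    (fun s hs => hd s (Ioo_subset_Icc_self hs))
  exact ⟨c, hc, hslope ▸ div_neg_of_neg_of_pos (sub_neg.2 hlt) (sub_pos.2 hab)⟩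

theorem exists_mem_Ioo_pos_of_hasDerivAt {h h' : ℝ → ℝ} {a b : ℝ} (hab : a < b)
    (hd : ∀ s ∈ Icc a b, HasDerivAt h (h' s) s) (hlt : h a < h b) : ∃ c ∈ Ioo a b, 0 < h' c := by
  obtain ⟨c, hc, hneg⟩ := exists_mem_Ioo_neg_of_hasDerivAt (h := -h) (h' := -h') hab
    (fun s hs => (hd s hs).neg) (neg_lt_neg hlt)
  exact ⟨c, hc, neg_neg_iff_pos.1 hneg⟩

theorem hasDerivAt_sin_sub_sin_pow_three_div_three (u : ℝ) :
    HasDerivAt (fun v => sin v - sin v ^ 3 / 3) (cos u ^ 3) u :=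
  ((hasDerivAt_sin u).sub (((hasDerivAt_sin u).pow 3).div_const 3)).congr_deriv <| by
    norm_num
    linear_combination -cos u * sin_sq_add_cos_sq u

noncomputable def cutoffCosCubePrimitive (u : ℝ) : ℝ :=
  if u < π then -(sin u - sin u ^ 3 / 3) else u - π

theorem hasDerivAt_cutoffCosCubePrimitive (u : ℝ) :
    HasDerivAt cutoffCosCubePrimitive (if u < π then -cos u ^ 3 else 1) u :=
  hasDerivAt_ite_lt (fun u _ => (hasDerivAt_sin_sub_sin_pow_three_div_three u).neg)
    (fun u _ => (hasDerivAt_id u).sub_const π) (by simp) (by norm_num) u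

theorem cutoffCosCubePrimitive_zero : cutoffCosCubePrimitive 0 = 0 := by
  simp [cutoffCosCubePrimitive, pi_pos]

theorem cutoffCosCubePrimitive_pi_div_two : cutoffCosCubePrimitive (π / 2) = -(2 / 3) := by
  norm_num [cutoffCosCubePrimitive, half_lt_self pi_pos]

theorem cutoffCosCubePrimitive_three_mul_pi_div_two :
    cutoffCosCubePrimitive (3 * π / 2) = π / 2 := by
  rw [cutoffCosCubePrimitive, if_neg (by linarith [pi_pos])]
  ring

theorem stmt_15_general (g : ℝ → ℝ)
    (hg₁ : ∀ u : ℝ, u < π → g u = -(Real.cos u) ^ 3)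
    (hg₂ : ∀ u : ℝ, π ≤ u → g u = 1)
    (δ : EuclideanSpace ℝ (Fin 3) → EuclideanSpace ℝ (Fin 3))
    (hδ : ∀ y, δ y = ![g (y 0), 0, 0])
    (x x' : ℝ → EuclideanSpace ℝ (Fin 3))
    (hx : ∀ s, HasDerivAt x (x' s) s)
    (h0 : x 0 = WithLp.toLp 2 (![0, 0, 0] : Fin 3 → ℝ)) (h1 : x 1 = WithLp.toLp 2 ![3 * π / 2, 0, 0]) :
    (∃ s₁ ∈ Set.Icc (0:ℝ) 1, ⟪δ (x s₁), x' s₁⟫ < 0) ∧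
    (∃ s₂ ∈ Set.Icc (0:ℝ) 1, 0 < ⟪δ (x s₂), x' s₂⟫) ∧
    ¬ (∀ s ∈ Set.Icc (0:ℝ) 1, ⟪δ (x s), x' s⟫ = 0) ∧
    ¬ (∃ c : ℝ, ∀ s ∈ Set.Icc (0:ℝ) 1, ⟪δ (x s), x' s⟫ = c) := by
  have hinner (s : ℝ) : ⟪δ (x s), x' s⟫ = g (x s 0) * x' s 0 := by
    simp [hδ, PiLp.inner_apply, Fin.sum_univ_three, mul_comm]
  have hG (u : ℝ) : HasDerivAt cutoffCosCubePrimitive (g u) u := by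
    convert hasDerivAt_cutoffCosCubePrimitive u using 1
    split_ifs with hu
    exacts [hg₁ u hu, hg₂ u (not_lt.1 hu)]
  have hx₁ (s : ℝ) : HasDerivAt (fun t => x t 0) (x' s 0) s :=
    (PiLp.hasFDerivAt_apply 2 (x s) 0).comp_hasDerivAt s (hx s)
  have hGx₁ (s : ℝ) : HasDerivAt (fun t => cutoffCosCubePrimitive (x t 0)) ⟪δ (x s), x' s⟫ s :=
    hinner s ▸ (hG (x s 0)).comp (h := fun t => x t 0) s (hx₁ s)
  have hx₁0 : x 0 0 = 0 := by simp [h0]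
  have hx₁1 : x 1 0 = 3 * π / 2 := by simp [h1]
  obtain ⟨s₀, hs₀, hxs₀ : x s₀ 0 = π / 2⟩ : π / 2 ∈ (fun t => x t 0) '' Icc 0 1 :=
    intermediate_value_Icc zero_le_one (continuous_iff_continuousAt.2 fun s =>
      (hx₁ s).continuousAt).continuousOn ⟨by linarith [hx₁0, pi_pos], by linarith [hx₁1, pi_pos]⟩
  have hs₀pos : 0 < s₀ := hs₀.1.lt_of_ne (by rintro rfl; linarith [hx₁0 ▸ hxs₀, pi_pos])
  have hdecr : cutoffCosCubePrimitive (x s₀ 0) < cutoffCosCubePrimitive (x 0 0) := by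
    rw [hxs₀, hx₁0, cutoffCosCubePrimitive_pi_div_two, cutoffCosCubePrimitive_zero]
    norm_num
  have hincr : cutoffCosCubePrimitive (x 0 0) < cutoffCosCubePrimitive (x 1 0) := by
    rw [hx₁0, hx₁1, cutoffCosCubePrimitive_zero, cutoffCosCubePrimitive_three_mul_pi_div_two]
    positivity
  obtain ⟨s₁, hs₁, hneg⟩ := exists_mem_Ioo_neg_of_hasDerivAt hs₀pos (fun s _ => hGx₁ s) hdecr
  obtain ⟨s₂, hs₂, hpos⟩ := exists_mem_Ioo_pos_of_hasDerivAt zero_lt_one (fun s _ => hGx₁ s) hincr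
  have hs₁' : s₁ ∈ Icc (0 : ℝ) 1 := ⟨hs₁.1.le, hs₁.2.le.trans hs₀.2⟩
  have hs₂' : s₂ ∈ Icc (0 : ℝ) 1 := Ioo_subset_Icc_self hs₂
  refine ⟨⟨s₁, hs₁', hneg⟩, ⟨s₂, hs₂', hpos⟩, fun h => (h s₁ hs₁').not_lt hneg, ?_⟩
  rintro ⟨c, hc⟩
  linarith [hc s₁ hs₁', hc s₂ hs₂']

/-- The core of counterexample (c) in Section 7 of the paper: with
`g(u) = −cos³u` for `u < π`, `g(u) = 1` for `u ≥ π`, and `δ(x₁,x₂,x₃) = (g(x₁),0,0)`,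
along every `C¹` curve in `ℝ³` from `(0,0,0)` to `(3π/2,0,0)` the function
`s ↦ ⟨δ(x(s)),x'(s)⟩` takes both a negative and a positive value; in particular it does not
have constant sign, is not identically zero, and is not constant. -/
theorem stmt_15 (g : ℝ → ℝ)
    (hg₁ : ∀ u : ℝ, u < π → g u = -(Real.cos u) ^ 3)
    (hg₂ : ∀ u : ℝ, π ≤ u → g u = 1)
    (δ : EuclideanSpace ℝ (Fin 3) → EuclideanSpace ℝ (Fin 3))
    (hδ : ∀ y, δ y = ![g (y 0), 0, 0])
    (x x' : ℝ → EuclideanSpace ℝ (Fin 3))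
    (hx : ∀ s, HasDerivAt x (x' s) s) (hx' : Continuous x')
    (h0 : x 0 = WithLp.toLp 2 (![0, 0, 0] : Fin 3 → ℝ)) (h1 : x 1 = WithLp.toLp 2 ![3 * π / 2, 0, 0]) :
    (∃ s₁ ∈ Set.Icc (0:ℝ) 1, ⟪δ (x s₁), x' s₁⟫ < 0) ∧
    (∃ s₂ ∈ Set.Icc (0:ℝ) 1, 0 < ⟪δ (x s₂), x' s₂⟫) ∧
    ¬ (∀ s ∈ Set.Icc (0:ℝ) 1, ⟪δ (x s), x' s⟫ = 0) ∧
    ¬ (∃ c : ℝ, ∀ s ∈ Set.Icc (0:ℝ) 1, ⟪δ (x s), x' s⟫ = c) :=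
  stmt_15_general g hg₁ hg₂ δ hδ x x' hx h0 h1
end

section
/- Fix N ≥ 1 and a continuous map δ : ℝ^N → ℝ^N. Let x, x₁, x₂, … : [0,1] → ℝ^N be C¹ curves such that xₙ → x uniformly on [0,1] and ∫₀¹ |xₙ'(s) − x'(s)|² ds → 0, and let t₁, t₂, … : [0,1] → ℝ be C¹ functions with sup_n ∫₀¹ tₙ'(s)² ds < ∞. Suppose that for every n there is a constant kₙ ∈ ℝ with (1/n) tₙ'(s) − ⟨δ(xₙ(s)), xₙ'(s)⟩ = kₙ for all s ∈ [0,1]. Then the function s ↦ ⟨δ(x(s)), x'(s)⟩ is constant on [0,1]. -/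
open Real Set Filter RealInnerProductSpace Topology

/-!
Write `gₙ = ⟪δ(xₙ), xₙ'⟫` and `g = ⟪δ(x), x'⟫`. Since `δ` is uniformly continuous near the
compact curve `x([0,1])`, `δ ∘ xₙ → δ ∘ x` uniformly; together with `xₙ' → x'` in `L²`, hence in
`L¹`, this gives `gₙ → g` in `L¹(0,1)`. The conservation law `gₙ = tₙ'/n - kₙ` shows that
`a ↦ ∫₀^a gₙ` is within `2‖tₙ'‖_{L¹}/n ≤ 2√M/n` of the linear function `a ↦ a ∫₀¹ gₙ`. In the limit
`∫₀^a g = a ∫₀¹ g` on `[0,1]`, and differentiating in `a` shows that `g` is constant.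
-/

theorem TendstoUniformlyOn.comp_continuous_of_isCompact {ι α β γ : Type*} [PseudoMetricSpace β]
    [ProperSpace β] [UniformSpace γ] {l : Filter ι} {t : Set α} {F : ι → α → β} {f : α → β}
    {g : β → γ} (hg : Continuous g) (ht : IsCompact (f '' t)) (h : TendstoUniformlyOn F f l t) :
    TendstoUniformlyOn (fun i x => g (F i x)) (fun x => g (f x)) l t := by
  have hK : IsCompact (Metric.cthickening 1 (f '' t)) := ht.cthickening
  refine (hK.uniformContinuousOn_of_continuous hg.continuousOn).comp_tendstoUniformlyOn_eventually
    ?_ (fun x hx => Metric.self_subset_cthickening _ (mem_image_of_mem f hx)) h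
  filter_upwards [Metric.tendstoUniformlyOn_iff.1 h 1 one_pos] with i hi x hx
  exact Metric.mem_cthickening_of_dist_le _ _ _ _ ⟨x, hx, rfl⟩ (dist_comm (f x) _ ▸ (hi x hx).le)

theorem intervalIntegral_norm_le_sqrt_integral_sq {E : Type*} [NormedAddCommGroup E] {f : ℝ → E}
    (hf : Continuous f) :
    ∫ s in (0:ℝ)..1, ‖f s‖ ≤ √(∫ s in (0:ℝ)..1, ‖f s‖ ^ 2) := by
  set J := ∫ s in (0:ℝ)..1, ‖f s‖
  rcases le_or_gt J 0 with hJ | hJ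
  · exact hJ.trans (sqrt_nonneg _)
  rw [le_sqrt hJ.le (intervalIntegral.integral_nonneg zero_le_one fun s _ => by positivity)]
  have hint : ∫ s in (0:ℝ)..1, 2 * J * ‖f s‖ ≤ ∫ s in (0:ℝ)..1, (J ^ 2 + ‖f s‖ ^ 2) :=
    intervalIntegral.integral_mono_on zero_le_one
      ((continuous_const.mul hf.norm).intervalIntegrable _ _)
      ((continuous_const.add (hf.norm.pow 2)).intervalIntegrable _ _)
      fun s _ => by nlinarith [sq_nonneg (‖f s‖ - J)]
  rw [intervalIntegral.integral_const_mul, intervalIntegral.integral_add (g := fun s => ‖f s‖ ^ 2)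
    intervalIntegrable_const ((hf.norm.pow 2).intervalIntegrable _ _)] at hint
  simp only [intervalIntegral.integral_const, sub_zero, one_smul] at hint
  nlinarith

theorem tendsto_intervalIntegral_norm_of_tendsto_sq {ι E : Type*} [NormedAddCommGroup E]
    {l : Filter ι} {u : ι → ℝ → E} (hu : ∀ i, Continuous (u i))
    (h : Tendsto (fun i => ∫ s in (0:ℝ)..1, ‖u i s‖ ^ 2) l (𝓝 0)) :
    Tendsto (fun i => ∫ s in (0:ℝ)..1, ‖u i s‖) l (𝓝 0) :=
  squeeze_zero (fun _ => intervalIntegral.integral_nonneg zero_le_one fun _ _ => norm_nonneg _)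
    (fun i => intervalIntegral_norm_le_sqrt_integral_sq (hu i)) (by simpa using h.sqrt)

theorem tendsto_intervalIntegral_abs_inner_sub {ι E : Type*} [NormedAddCommGroup E]
    [InnerProductSpace ℝ E] {l : Filter ι} {F G : ι → ℝ → E} {f g : ℝ → E}
    (hF : ∀ i, Continuous (F i)) (hG : ∀ i, Continuous (G i)) (hf : Continuous f)
    (hg : Continuous g) (hFf : TendstoUniformlyOn F f l (Icc 0 1))
    (hGg : Tendsto (fun i => ∫ s in (0:ℝ)..1, ‖G i s - g s‖) l (𝓝 0)) :
    Tendsto (fun i => ∫ s in (0:ℝ)..1, |⟪F i s, G i s⟫ - ⟪f s, g s⟫|) l (𝓝 0) := by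
  obtain ⟨C, hC⟩ := isCompact_Icc.exists_bound_of_continuousOn hf.continuousOn
  have hC0 : 0 ≤ C := (norm_nonneg _).trans (hC 0 ⟨le_rfl, zero_le_one⟩)
  set K := ∫ s in (0:ℝ)..1, ‖g s‖
  have hK : 0 ≤ K := intervalIntegral.integral_nonneg zero_le_one fun _ _ => norm_nonneg _
  have hbound : ∀ η ≤ 1, ∀ i, (∀ s ∈ Icc (0:ℝ) 1, dist (f s) (F i s) < η) →
      ∫ s in (0:ℝ)..1, |⟪F i s, G i s⟫ - ⟪f s, g s⟫| ≤
        η * K + (C + 1) * ∫ s in (0:ℝ)..1, ‖G i s - g s‖ := by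
    intro η hη i hi
    rw [← intervalIntegral.integral_const_mul, ← intervalIntegral.integral_const_mul,
      ← intervalIntegral.integral_add (Continuous.intervalIntegrable (by fun_prop) _ _)
        (Continuous.intervalIntegrable (by fun_prop) _ _)]
    refine intervalIntegral.integral_mono_on zero_le_one
      (Continuous.intervalIntegrable (by fun_prop) _ _)
      (Continuous.intervalIntegrable (by fun_prop) _ _) fun s hs => ?_
    have hFs : ‖F i s - f s‖ ≤ η := by rw [← dist_eq_norm, dist_comm]; exact (hi s hs).le
    have hF1 : ‖F i s‖ ≤ C + 1 := by
      calc ‖F i s‖ ≤ ‖f s‖ + ‖F i s - f s‖ := norm_le_norm_add_norm_sub' _ _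
        _ ≤ C + 1 := add_le_add (hC s hs) (hFs.trans hη)
    calc |⟪F i s, G i s⟫ - ⟪f s, g s⟫| = |⟪F i s - f s, g s⟫ + ⟪F i s, G i s - g s⟫| := by
          rw [inner_sub_left, inner_sub_right]; ring_nf
      _ ≤ ‖F i s - f s‖ * ‖g s‖ + ‖F i s‖ * ‖G i s - g s‖ :=
          (abs_add_le _ _).trans (add_le_add (abs_real_inner_le_norm _ _)
            (abs_real_inner_le_norm _ _))
      _ ≤ η * ‖g s‖ + (C + 1) * ‖G i s - g s‖ := by gcongr
  rw [Metric.tendsto_nhds]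
  intro ε hε
  have hη : 0 < min 1 (ε / (2 * (K + 1))) := by positivity
  filter_upwards [Metric.tendstoUniformlyOn_iff.1 hFf _ hη,
    (tendsto_order.1 hGg).2 (ε / (2 * (C + 1))) (by positivity)] with i hi hi'
  have h1 : min 1 (ε / (2 * (K + 1))) * K ≤ ε / 2 := by
    calc _ ≤ ε / (2 * (K + 1)) * (K + 1) :=
          mul_le_mul (min_le_right _ _) (by linarith) hK (by positivity)
      _ = ε / 2 := by field_simp
  have h2 : (C + 1) * ∫ s in (0:ℝ)..1, ‖G i s - g s‖ < ε / 2 := by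
    calc _ < (C + 1) * (ε / (2 * (C + 1))) := by gcongr
      _ = ε / 2 := by field_simp
  rw [Real.dist_eq, sub_zero, abs_of_nonneg (intervalIntegral.integral_nonneg zero_le_one
    fun _ _ => abs_nonneg _)]
  linarith [hbound _ (min_le_left _ _) i hi]

theorem abs_intervalIntegral_le_of_mem_Icc {f : ℝ → ℝ} (hf : Continuous f) {a : ℝ}
    (ha : a ∈ Icc (0:ℝ) 1) : |∫ s in (0:ℝ)..a, f s| ≤ ∫ s in (0:ℝ)..1, |f s| :=
  (intervalIntegral.abs_integral_le_integral_abs ha.1).trans <|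
    intervalIntegral.integral_mono_interval le_rfl ha.1 ha.2
      (Eventually.of_forall fun _ => abs_nonneg _) (hf.abs.intervalIntegrable _ _)

theorem tendsto_intervalIntegral_of_tendsto_integral_abs_sub {ι : Type*} {l : Filter ι}
    {F : ι → ℝ → ℝ} {f : ℝ → ℝ} (hF : ∀ i, Continuous (F i)) (hf : Continuous f)
    (h : Tendsto (fun i => ∫ s in (0:ℝ)..1, |F i s - f s|) l (𝓝 0)) {a : ℝ}
    (ha : a ∈ Icc (0:ℝ) 1) :
    Tendsto (fun i => ∫ s in (0:ℝ)..a, F i s) l (𝓝 (∫ s in (0:ℝ)..a, f s)) := by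
  rw [tendsto_iff_norm_sub_tendsto_zero]
  refine squeeze_zero (fun _ => norm_nonneg _) (fun i => ?_) h
  rw [← intervalIntegral.integral_sub ((hF i).intervalIntegrable _ _) (hf.intervalIntegrable _ _)]
  exact abs_intervalIntegral_le_of_mem_Icc ((hF i).sub hf) ha

theorem abs_intervalIntegral_sub_mul_le {f h : ℝ → ℝ} {c k : ℝ} (hf : Continuous f)
    (hfh : ∀ s ∈ Icc (0:ℝ) 1, c * f s - h s = k) {a : ℝ} (ha : a ∈ Icc (0:ℝ) 1) :
    |(∫ s in (0:ℝ)..a, h s) - a * ∫ s in (0:ℝ)..1, h s| ≤ 2 * |c| * ∫ s in (0:ℝ)..1, |f s| := by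
  have hint : ∀ b ∈ Icc (0:ℝ) 1, ∫ s in (0:ℝ)..b, h s = c * (∫ s in (0:ℝ)..b, f s) - k * b := by
    intro b hb
    rw [intervalIntegral.integral_congr (g := fun s => c * f s - k) fun s hs => ?_,
      intervalIntegral.integral_sub (f := fun s => c * f s) (g := fun _ => k)
        ((continuous_const.mul hf).intervalIntegrable _ _)
        intervalIntegrable_const, intervalIntegral.integral_const_mul,
      intervalIntegral.integral_const]
    · simp [mul_comm]
    · rw [uIcc_of_le hb.1] at hs
      linarith [hfh s ⟨hs.1, hs.2.trans hb.2⟩]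
  have h1 : (1:ℝ) ∈ Icc (0:ℝ) 1 := ⟨zero_le_one, le_rfl⟩
  have hfa := abs_intervalIntegral_le_of_mem_Icc hf ha
  have hf1 := abs_intervalIntegral_le_of_mem_Icc hf h1
  rw [hint a ha, hint 1 h1]
  calc |c * (∫ s in (0:ℝ)..a, f s) - k * a - a * (c * (∫ s in (0:ℝ)..1, f s) - k * 1)|
      = |c| * |(∫ s in (0:ℝ)..a, f s) - a * ∫ s in (0:ℝ)..1, f s| := by rw [← abs_mul]; ring_nf
    _ ≤ |c| * (|∫ s in (0:ℝ)..a, f s| + a * |∫ s in (0:ℝ)..1, f s|) := by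
      gcongr
      exact (abs_sub _ _).trans_eq (by rw [abs_mul, abs_of_nonneg ha.1])
    _ ≤ |c| * ((∫ s in (0:ℝ)..1, |f s|) + ∫ s in (0:ℝ)..1, |f s|) := by
      gcongr
      exact (mul_le_of_le_one_left (abs_nonneg _) ha.2).trans hf1
    _ = 2 * |c| * ∫ s in (0:ℝ)..1, |f s| := by ring

theorem eq_intervalIntegral_of_forall_intervalIntegral_eq_mul {g : ℝ → ℝ} (hg : Continuous g)
    (h : ∀ a ∈ Icc (0:ℝ) 1, ∫ s in (0:ℝ)..a, g s = a * ∫ s in (0:ℝ)..1, g s) :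
    ∀ s ∈ Icc (0:ℝ) 1, g s = ∫ s in (0:ℝ)..1, g s := by
  intro s hs
  set c := ∫ s in (0:ℝ)..1, g s
  have hlin : HasDerivWithinAt (fun a => ∫ s in (0:ℝ)..a, g s) c (Icc 0 1) s :=
    (hasDerivAt_mul_const c).hasDerivWithinAt.congr h (h s hs)
  exact (uniqueDiffOn_Icc zero_lt_one s hs).eq_deriv _
    (hg.integral_hasStrictDerivAt 0 s).hasDerivAt.hasDerivWithinAt hlin

theorem intervalIntegral_eq_mul_of_conservation_law {G T' : ℕ → ℝ → ℝ} {g : ℝ → ℝ}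
    (hT' : ∀ n, Continuous (T' n)) (hbound : ∃ M : ℝ, ∀ n, ∫ s in (0:ℝ)..1, T' n s ^ 2 ≤ M)
    (hcons : ∀ n : ℕ, 1 ≤ n → ∃ k : ℝ, ∀ s ∈ Icc (0:ℝ) 1, (1 / (n : ℝ)) * T' n s - G n s = k)
    (hG : ∀ a ∈ Icc (0:ℝ) 1,
      Tendsto (fun n => ∫ s in (0:ℝ)..a, G n s) atTop (𝓝 (∫ s in (0:ℝ)..a, g s))) :
    ∀ a ∈ Icc (0:ℝ) 1, ∫ s in (0:ℝ)..a, g s = a * ∫ s in (0:ℝ)..1, g s := by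
  obtain ⟨M, hM⟩ := hbound
  intro a ha
  have hsmall : ∀ n : ℕ, 1 ≤ n →
      ‖(∫ s in (0:ℝ)..a, G n s) - a * ∫ s in (0:ℝ)..1, G n s‖ ≤ 2 * √M / n := by
    intro n hn
    obtain ⟨k, hk⟩ := hcons n hn
    have hTM : ∫ s in (0:ℝ)..1, |T' n s| ≤ √M := by
      have hCS := intervalIntegral_norm_le_sqrt_integral_sq (hT' n)
      simp only [Real.norm_eq_abs, sq_abs] at hCS
      exact hCS.trans (sqrt_le_sqrt (hM n))
    calc _ ≤ 2 * |1 / (n : ℝ)| * ∫ s in (0:ℝ)..1, |T' n s| :=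
          abs_intervalIntegral_sub_mul_le (hT' n) hk ha
      _ ≤ 2 * |1 / (n : ℝ)| * √M := by gcongr
      _ = 2 * √M / n := by rw [abs_of_nonneg (by positivity)]; ring
  have hlim := (hG a ha).sub ((hG 1 ⟨zero_le_one, le_rfl⟩).const_mul a)
  have hzero := squeeze_zero_norm' (eventually_atTop.2 ⟨1, hsmall⟩)
    (tendsto_const_div_atTop_nhds_zero_nat (2 * √M))
  exact sub_eq_zero.1 (tendsto_nhds_unique hlim hzero)

theorem stmt_17_general (N : ℕ)
    (δ : EuclideanSpace ℝ (Fin N) → EuclideanSpace ℝ (Fin N)) (hδ : Continuous δ)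
    (x x' : ℝ → EuclideanSpace ℝ (Fin N))
    (hx : ∀ s, HasDerivAt x (x' s) s) (hx' : Continuous x')
    (X X' : ℕ → ℝ → EuclideanSpace ℝ (Fin N))
    (hX : ∀ n s, HasDerivAt (X n) (X' n s) s) (hX' : ∀ n, Continuous (X' n))
    (T' : ℕ → ℝ → ℝ)
    (hT' : ∀ n, Continuous (T' n))
    (hunif : TendstoUniformlyOn X x atTop (Set.Icc (0:ℝ) 1))
    (hL2 : Tendsto (fun n => ∫ s in (0:ℝ)..1, ‖X' n s - x' s‖ ^ 2) atTop (nhds 0))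
    (hbound : ∃ M : ℝ, ∀ n : ℕ, (∫ s in (0:ℝ)..1, (T' n s) ^ 2) ≤ M)
    (hcons : ∀ n : ℕ, 1 ≤ n → ∃ k : ℝ, ∀ s ∈ Set.Icc (0:ℝ) 1,
      (1 / (n : ℝ)) * T' n s - ⟪δ (X n s), X' n s⟫ = k) :
    ∃ c : ℝ, ∀ s ∈ Set.Icc (0:ℝ) 1, ⟪δ (x s), x' s⟫ = c := by
  have hxc : Continuous x := Differentiable.continuous fun s => (hx s).differentiableAt
  have hXc (n : ℕ) : Continuous (X n) :=
    Differentiable.continuous fun s => (hX n s).differentiableAt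
  have hL1 := tendsto_intervalIntegral_abs_inner_sub (fun n => hδ.comp (hXc n)) hX'
    (hδ.comp hxc) hx' (hunif.comp_continuous_of_isCompact hδ (isCompact_Icc.image hxc))
    (tendsto_intervalIntegral_norm_of_tendsto_sq (fun n => (hX' n).sub hx') hL2)
  have hlim (a : ℝ) (ha : a ∈ Icc (0:ℝ) 1) :=
    tendsto_intervalIntegral_of_tendsto_integral_abs_sub
      (fun n => (hδ.comp (hXc n)).inner (hX' n)) ((hδ.comp hxc).inner hx') hL1 ha
  exact ⟨_, eq_intervalIntegral_of_forall_intervalIntegral_eq_mul ((hδ.comp hxc).inner hx')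
    (intervalIntegral_eq_mul_of_conservation_law hT' hbound hcons hlim)⟩

/-- The key limit step in the proof of Theorem 1.2 of the paper: if `C¹` curves `xₙ`
converge to `x` uniformly on `[0,1]` with `xₙ' → x'` in `L²(0,1)`, the time derivatives
`tₙ'` are bounded in `L²(0,1)`, and each `n ≥ 1` satisfies the conservation law
`(1/n) tₙ' − ⟨δ(xₙ),xₙ'⟩ ≡ kₙ` of the perturbed metric, then the limit curve satisfies
the conservation law of the lightlike metric: `⟨δ(x),x'⟩` is constant on `[0,1]`. -/
theorem stmt_17 (N : ℕ) (hN : 1 ≤ N)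
    (δ : EuclideanSpace ℝ (Fin N) → EuclideanSpace ℝ (Fin N)) (hδ : Continuous δ)
    (x x' : ℝ → EuclideanSpace ℝ (Fin N))
    (hx : ∀ s, HasDerivAt x (x' s) s) (hx' : Continuous x')
    (X X' : ℕ → ℝ → EuclideanSpace ℝ (Fin N))
    (hX : ∀ n s, HasDerivAt (X n) (X' n s) s) (hX' : ∀ n, Continuous (X' n))
    (T T' : ℕ → ℝ → ℝ)
    (hT : ∀ n s, HasDerivAt (T n) (T' n s) s) (hT' : ∀ n, Continuous (T' n))
    (hunif : TendstoUniformlyOn X x atTop (Set.Icc (0:ℝ) 1))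
    (hL2 : Tendsto (fun n => ∫ s in (0:ℝ)..1, ‖X' n s - x' s‖ ^ 2) atTop (nhds 0))
    (hbound : ∃ M : ℝ, ∀ n : ℕ, (∫ s in (0:ℝ)..1, (T' n s) ^ 2) ≤ M)
    (hcons : ∀ n : ℕ, 1 ≤ n → ∃ k : ℝ, ∀ s ∈ Set.Icc (0:ℝ) 1,
      (1 / (n : ℝ)) * T' n s - ⟪δ (X n s), X' n s⟫ = k) :
    ∃ c : ℝ, ∀ s ∈ Set.Icc (0:ℝ) 1, ⟪δ (x s), x' s⟫ = c :=
  stmt_17_general N δ hδ x x' hx hx' X X' hX hX' T' hT' hunif hL2 hbound hcons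
end
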